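/- arXiv:2510.21496 — 12 statements merged into one kernel-verified Lean document; each statement's English description precedes it below -/
import Mathlib

section
/- Suppose e : [ω₁]² → ω satisfies: (coh1) for every β < ω₁ the map α ↦ e(α,β) on β is injective, and (coh2) for all α < β < γ < ω₁, e(α,β) ≤ max(e(α,γ), e(β,γ)) and e(α,γ) ≤ max(e(α,β), e(β,γ)). Then e is coherent: for all β < γ < ω₁, the set {ξ < β : e(ξ,β) ≠ e(ξ,γ)} is finite. -/
noncomputable def omega1 : Ordinal.{0} := (Cardinal.aleph 1).ord

/-- If `e : [ω₁]² → ω` satisfies (coh1) (each vertical section `e_β` is injective) and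
(coh2) (the two max-inequalities), then `e` is coherent: for all `β < γ < ω₁`,
the set `{ξ < β : e(ξ,β) ≠ e(ξ,γ)}` is finite. -/
theorem coherent_of_coh1_coh2
    (e : Ordinal → Ordinal → ℕ)
    (coh1 : ∀ β, β < omega1 → Set.InjOn (fun α => e α β) (Set.Iio β))
    (coh2 : ∀ α β γ : Ordinal, α < β → β < γ → γ < omega1 →
      e α β ≤ max (e α γ) (e β γ) ∧ e α γ ≤ max (e α β) (e β γ)) :
    ∀ β γ : Ordinal, β < γ → γ < omega1 →
      {ξ : Ordinal | ξ < β ∧ e ξ β ≠ e ξ γ}.Finite := by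
  intro β γ hβγ hγ
  have hβ : β < omega1 := hβγ.trans hγ
  set D : Set Ordinal := {ξ : Ordinal | ξ < β ∧ e ξ β ≠ e ξ γ}
  -- for ξ ∈ D, e ξ β ≤ e β γ
  have key : ∀ ξ ∈ D, e ξ β ≤ e β γ := by
    intro ξ hξ
    obtain ⟨hξβ, hne⟩ := hξ
    obtain ⟨h1, h2⟩ := coh2 ξ β γ hξβ hβγ hγ
    rcases le_max_iff.mp h1 with h' | h'
    · rcases le_max_iff.mp h2 with h'' | h'' <;> omega
    · exact h'
  have himg : (fun α => e α β) '' D ⊆ Set.Iic (e β γ) := by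
    rintro _ ⟨ξ, hξ, rfl⟩
    exact key ξ hξ
  have hfin : ((fun α => e α β) '' D).Finite := (Set.finite_Iic _).subset himg
  exact Set.Finite.of_finite_image hfin ((coh1 β hβ).mono (fun ξ hξ => hξ.1))
end

section
/- Let e : [ω₁]² → ω satisfy (coh1) injectivity of e_β for each β, (coh2) for α<β<γ, e(β,γ) ≥ max(e(α,β), e(α,γ)) whenever e(α,β) ≠ e(α,γ), and (coh3) e(α,β) ≠ e(β,γ) for α<β<γ. If a, b are finite subsets of ω₁ such that (a,e) is isomorphic to (b,e) (i.e., they have the same cardinality and e agrees on corresponding pairs under the order isomorphism), then a ∩ b is an initial segment of both a and b. -/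
/-- If `e` satisfies (coh1)-(coh3) and the finite sets `a`, `b` (given by their increasing
enumerations `a, b : Fin n → Ordinal`) are isomorphic with respect to `e`, then `a ∩ b` is
an initial segment of both `a` and `b` (and the enumerations agree there). -/
theorem inter_initial_segment_of_iso
    (e : Ordinal → Ordinal → ℕ)
    (coh1 : ∀ β, β < omega1 → Set.InjOn (fun α => e α β) (Set.Iio β))
    (coh2 : ∀ α β γ : Ordinal, α < β → β < γ → γ < omega1 →
      e α β ≠ e α γ → max (e α β) (e α γ) ≤ e β γ)
    (coh3 : ∀ α β γ : Ordinal, α < β → β < γ → γ < omega1 → e α β ≠ e β γ)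
    (n : ℕ) (a b : Fin n → Ordinal)
    (ha : StrictMono a) (hb : StrictMono b)
    (haw : ∀ i, a i < omega1) (hbw : ∀ i, b i < omega1)
    (hiso : ∀ i j : Fin n, i < j → e (a i) (a j) = e (b i) (b j)) :
    ∃ k : ℕ, k ≤ n ∧
      (∀ i : Fin n, (i : ℕ) < k → a i = b i) ∧
      Set.range a ∩ Set.range b = {x | ∃ i : Fin n, (i : ℕ) < k ∧ x = a i} := by
  classical
  -- Fact 1 (generic form): if `i < j` then `a i ≠ b j`.
  have key1 : ∀ (a b : Fin n → Ordinal), StrictMono a → StrictMono b →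
      (∀ i, a i < omega1) →
      (∀ i j : Fin n, i < j → e (a i) (a j) = e (b i) (b j)) →
      ∀ i j : Fin n, i < j → a i ≠ b j := by
    intro a b ha hb haw hiso i j hij hx
    have h1 : b i < a i := by rw [hx]; exact hb hij
    have h2 : a i < a j := ha hij
    apply coh3 (b i) (a i) (a j) h1 h2 (haw j)
    calc e (b i) (a i) = e (b i) (b j) := by rw [hx]
      _ = e (a i) (a j) := (hiso i j hij).symm
  have keyeq : ∀ i j : Fin n, a i = b j → i = j := by
    intro i j hx
    rcases lt_trichotomy i j with h | h | h
    · exact absurd hx (key1 a b ha hb haw hiso i j h)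
    · exact h
    · exact absurd hx.symm
        (key1 b a hb ha hbw (fun i j h => (hiso i j h).symm) j i h)
  -- Fact 2: if `a i = b i` then the enumerations agree below `i`.
  have key2 : ∀ i l : Fin n, a i = b i → l < i → a l = b l := by
    intro i l hx hl
    have hal : a l ∈ Set.Iio (a i) := ha hl
    have hbl : b l ∈ Set.Iio (a i) := by
      have hlt : b l < b i := hb hl
      rwa [← hx] at hlt
    have heq : e (a l) (a i) = e (b l) (a i) := by
      calc e (a l) (a i) = e (b l) (b i) := hiso l i hl
        _ = e (b l) (a i) := by rw [hx]
    exact coh1 (a i) (haw i) hal hbl heq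
  by_cases h : ∃ m : ℕ, ∃ hm : m < n, a ⟨m, hm⟩ ≠ b ⟨m, hm⟩
  · obtain ⟨hkn, hne⟩ := Nat.find_spec h
    set k := Nat.find h with hk
    have hagree : ∀ i : Fin n, (i : ℕ) < k → a i = b i := by
      intro i hi
      have := Nat.find_min h hi
      push_neg at this
      simpa using this i.isLt
    refine ⟨k, hkn.le, hagree, ?_⟩
    ext x
    constructor
    · rintro ⟨⟨i, rfl⟩, ⟨j, hj⟩⟩
      have hij : i = j := keyeq i j hj.symm
      subst hij
      refine ⟨i, ?_, rfl⟩
      by_contra hik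
      push_neg at hik
      apply hne
      rcases lt_or_eq_of_le hik with hlt | heq
      · exact key2 i ⟨k, hkn⟩ hj.symm hlt
      · have : i = (⟨k, hkn⟩ : Fin n) := by
          apply Fin.ext; exact heq.symm
        rw [← this]; exact hj.symm
    · rintro ⟨i, hik, rfl⟩
      exact ⟨⟨i, rfl⟩, ⟨i, (hagree i hik).symm⟩⟩
  · push_neg at h
    have hall : ∀ i : Fin n, a i = b i := fun i => by simpa using h i i.isLt
    refine ⟨n, le_rfl, fun i _ => hall i, ?_⟩
    ext x
    constructor
    · rintro ⟨⟨i, rfl⟩, -⟩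
      exact ⟨i, i.isLt, rfl⟩
    · rintro ⟨i, -, rfl⟩
      exact ⟨⟨i, rfl⟩, ⟨i, (hall i).symm⟩⟩
end

section
/- Suppose e : [ω₁]² → ω satisfies (coh1): for every β < ω₁, the map α ↦ e(α,β) is injective on β. Then for every uncountable Γ ⊆ ω₁, for all but countably many α ∈ Γ, for every n < ω the set {β ∈ Γ : β > α and e(α,β) > n} is uncountable. -/
lemma countable_Iic_of_lt_omega1 {α : Ordinal} (h : α < omega1) :
    (Set.Iic α).Countable := by
  rw [← Cardinal.le_aleph0_iff_set_countable]
  have hsub : Set.Iic α ⊆ Set.Iio (α + 1) := fun x hx =>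
    lt_of_le_of_lt hx (lt_add_one α)
  have hcard : (α + 1).card ≤ Cardinal.aleph0 := by
    have h1 : α.card < Cardinal.aleph 1 := by
      rwa [omega1, Cardinal.lt_ord] at h
    have h2 : α.card ≤ Cardinal.aleph0 := by
      rwa [← Cardinal.succ_aleph0, Order.lt_succ_iff] at h1
    calc (α + 1).card ≤ α.card + 1 := le_of_eq (by simp [Ordinal.card_add])
      _ ≤ Cardinal.aleph0 + Cardinal.aleph0 := by
          exact add_le_add h2 (Cardinal.one_le_aleph0.trans le_rfl)
      _ = Cardinal.aleph0 := by simp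
  calc Cardinal.mk (Set.Iic α) ≤ Cardinal.mk (Set.Iio (α + 1)) := Cardinal.mk_le_mk_of_subset hsub
    _ = Cardinal.lift.{1} (α + 1).card := Ordinal.mk_Iio_ordinal _
    _ ≤ Cardinal.lift.{1} Cardinal.aleph0 := Cardinal.lift_le.2 hcard
    _ = Cardinal.aleph0 := Cardinal.lift_aleph0

/-- If each vertical section of `e` is injective, then for every uncountable `Γ ⊆ ω₁`,
for all but countably many `α ∈ Γ`, for every `n` the set
`{β ∈ Γ : β > α ∧ e(α,β) > n}` is uncountable. -/
theorem fact1
    (e : Ordinal → Ordinal → ℕ)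
    (coh1 : ∀ β, β < omega1 → Set.InjOn (fun α => e α β) (Set.Iio β)) :
    ∀ Γ : Set Ordinal, Γ ⊆ Set.Iio omega1 → ¬Γ.Countable →
      {α ∈ Γ | ∃ n : ℕ, ({β ∈ Γ | α < β ∧ n < e α β}).Countable}.Countable := by
  intro Γ hΓ hunc
  by_contra hS
  have hex : ∃ n : ℕ, ¬ ({α ∈ Γ | ({β ∈ Γ | α < β ∧ n < e α β}).Countable}).Countable := by
    by_contra hall
    push_neg at hall
    apply hS
    have hsub : {α ∈ Γ | ∃ n : ℕ, ({β ∈ Γ | α < β ∧ n < e α β}).Countable} ⊆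
        ⋃ n : ℕ, {α ∈ Γ | ({β ∈ Γ | α < β ∧ n < e α β}).Countable} := by
      rintro α ⟨hα, n, hn⟩
      exact Set.mem_iUnion.2 ⟨n, hα, hn⟩
    exact (Set.countable_iUnion hall).mono hsub
  obtain ⟨n, hn⟩ := hex
  set S := {α ∈ Γ | ({β ∈ Γ | α < β ∧ n < e α β}).Countable} with hSdef
  have hinf : S.Infinite := by
    by_contra h
    exact hn ((Set.not_infinite.mp h).countable)
  obtain ⟨F, hFS, hFcard⟩ := hinf.exists_subset_card_eq (n + 2)
  set bad : Set Ordinal :=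
    (⋃ α ∈ F, {β ∈ Γ | α < β ∧ n < e α β}) ∪ (⋃ α ∈ F, Set.Iic α) with hbad
  have hbadc : bad.Countable := by
    apply Set.Countable.union
    · exact Set.Countable.biUnion (F.countable_toSet) (fun α hα => (hFS hα).2)
    · exact Set.Countable.biUnion (F.countable_toSet)
        (fun α hα => countable_Iic_of_lt_omega1 (hΓ (hFS hα).1))
  have hne : (Γ \ bad).Nonempty := by
    rw [Set.nonempty_iff_ne_empty]
    intro hempty
    exact hunc (hbadc.mono (Set.diff_eq_empty.mp hempty))
  obtain ⟨β, hβΓ, hβbad⟩ := hne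
  have hkey : ∀ α ∈ F, α < β ∧ e α β ≤ n := by
    intro α hα
    have h1 : β ∉ Set.Iic α := fun h => hβbad (Or.inr (Set.mem_biUnion hα h))
    have hαβ : α < β := not_le.mp h1
    refine ⟨hαβ, ?_⟩
    by_contra hgt
    exact hβbad (Or.inl (Set.mem_biUnion hα ⟨hβΓ, hαβ, not_le.mp hgt⟩))
  have hinj : Set.InjOn (fun α => e α β) ↑F := by
    apply (coh1 β (hΓ hβΓ)).mono
    intro α hα
    exact (hkey α hα).1
  have hle : F.card ≤ (Finset.range (n + 1)).card := by
    apply Finset.card_le_card_of_injOn (fun α => e α β)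
    · intro α hα
      exact Finset.mem_range.2 (Nat.lt_succ_of_le (hkey α hα).2)
    · exact hinj
  rw [hFcard, Finset.card_range] at hle
  omega
end

section
/- For every finite set F of ordinals below ω₁ and every m < ω, the m-closure cl(F,m) is finite, where cl(F,m) is the smallest set A ⊇ F such that for every β ∈ A, {α < β : e(α,β) ≤ m} ⊆ A, assuming e : [ω₁]² → ω has all vertical sections e_β injective (so that each set {α < β : e(α,β) ≤ m} is finite). -/
/-- Closure of a single ordinal under the step `β ↦ {α < β : e α β ≤ m}`. -/
def clOne (e : Ordinal → Ordinal → ℕ) (m : ℕ) (β : Ordinal) : Set Ordinal :=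
  {γ | γ = β ∨ ∃ α, ∃ _ : α < β, e α β ≤ m ∧ γ ∈ clOne e m α}
termination_by β
decreasing_by exact ‹_ < β›

lemma mem_clOne_self (e : Ordinal → Ordinal → ℕ) (m : ℕ) (β : Ordinal) :
    β ∈ clOne e m β := by
  rw [clOne]; exact Or.inl rfl

lemma clOne_le (e : Ordinal → Ordinal → ℕ) (m : ℕ) :
    ∀ β, ∀ γ ∈ clOne e m β, γ ≤ β := by
  intro β
  induction β using Ordinal.induction with
  | h β ih =>
    intro γ hγ
    rw [clOne] at hγ
    rcases hγ with rfl | ⟨α, hαβ, _, hγα⟩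
    · exact le_refl _
    · exact (ih α hαβ γ hγα).trans hαβ.le

lemma clOne_closed (e : Ordinal → Ordinal → ℕ) (m : ℕ) :
    ∀ β, ∀ γ ∈ clOne e m β, ∀ α, α < γ → e α γ ≤ m → α ∈ clOne e m β := by
  intro β
  induction β using Ordinal.induction with
  | h β ih =>
    intro γ hγ α hαγ he
    rw [clOne] at hγ ⊢
    rcases hγ with rfl | ⟨α', hα'β, he', hγα'⟩
    · exact Or.inr ⟨α, hαγ, he, mem_clOne_self e m α⟩
    · exact Or.inr ⟨α', hα'β, he', ih α' hα'β γ hγα' α hαγ he⟩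

lemma step_finite (e : Ordinal → Ordinal → ℕ)
    (coh1 : ∀ β, β < omega1 → Set.InjOn (fun α => e α β) (Set.Iio β))
    (m : ℕ) (β : Ordinal) (hβ : β < omega1) :
    {α | α < β ∧ e α β ≤ m}.Finite := by
  apply Set.Finite.of_finite_image (f := fun α => e α β)
  · apply (Set.finite_Iic m).subset
    rintro n ⟨α, ⟨_, hle⟩, rfl⟩
    exact hle
  · exact (coh1 β hβ).mono (fun α hα => hα.1)

lemma clOne_finite (e : Ordinal → Ordinal → ℕ)
    (coh1 : ∀ β, β < omega1 → Set.InjOn (fun α => e α β) (Set.Iio β)) (m : ℕ) :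
    ∀ β, β < omega1 → (clOne e m β).Finite := by
  intro β
  induction β using Ordinal.induction with
  | h β ih =>
    intro hβ
    have hsub : clOne e m β ⊆
        insert β (⋃ α ∈ {α | α < β ∧ e α β ≤ m}, clOne e m α) := by
      intro γ hγ
      rw [clOne] at hγ
      rcases hγ with rfl | ⟨α, hαβ, he, hγα⟩
      · exact Set.mem_insert _ _
      · exact Set.mem_insert_of_mem _ (Set.mem_biUnion ⟨hαβ, he⟩ hγα)
    refine Set.Finite.subset ?_ hsub
    refine Set.Finite.insert _ (Set.Finite.biUnion (step_finite e coh1 m β hβ) ?_)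
    intro α hα
    exact ih α hα.1 (hα.1.trans hβ)

/-- For a finite `F ⊆ ω₁` and `m < ω`, the `m`-closure `cl(F,m)` — the smallest set
containing `F` and closed under `β ↦ {α < β : e(α,β) ≤ m}` — is finite, provided every
vertical section `e_β` of `e` is injective. -/
theorem closure_finite
    (e : Ordinal → Ordinal → ℕ)
    (coh1 : ∀ β, β < omega1 → Set.InjOn (fun α => e α β) (Set.Iio β))
    (F : Set Ordinal) (hF : F.Finite) (hFw : F ⊆ Set.Iio omega1) (m : ℕ) :
    (⋂₀ {A : Set Ordinal | F ⊆ A ∧ ∀ β ∈ A, ∀ α, α < β → e α β ≤ m → α ∈ A}).Finite := by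
  set A : Set Ordinal := ⋃ β ∈ F, clOne e m β with hA
  have hAfin : A.Finite :=
    hF.biUnion (fun β hβ => clOne_finite e coh1 m β (hFw hβ))
  have hAmem : A ∈ {A : Set Ordinal | F ⊆ A ∧ ∀ β ∈ A, ∀ α, α < β → e α β ≤ m → α ∈ A} := by
    constructor
    · exact fun β hβ => Set.mem_biUnion hβ (mem_clOne_self e m β)
    · rintro γ hγ α hαγ he
      rw [hA, Set.mem_iUnion₂] at hγ
      obtain ⟨β, hβF, hγβ⟩ := hγ
      exact Set.mem_biUnion hβF (clOne_closed e m β γ hγβ α hαγ he)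
  exact hAfin.subset (Set.sInter_subset_of_mem hAmem)
end

section
/- Let 𝒜 ⊂ [ω₁]^{<ω} be an uncountable family of pairwise 'non-overlapping' finite sets (for a ≠ b in 𝒜, either max a < min b or max b < min a), let n ≥ 2, and let τ : [ω₁]ⁿ → 2 be a coloring. Suppose there exists δ < ω₁ such that for every finite 𝒳 ⊂ 𝒜 consisting of sets contained in ω₁ \ δ, there exists a 0-homogeneous set b (for τ) with b ∩ a ≠ ∅ for every a ∈ 𝒳. Then there is a single 0-homogeneous set meeting all but countably many elements of 𝒜. -/
/-- `B` is 0-homogeneous for the `n`-ary coloring `τ`. -/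
def ZeroHomogeneous (n : ℕ) (τ : Finset Ordinal → ℕ) (B : Set Ordinal) : Prop :=
  ∀ s : Finset Ordinal, ↑s ⊆ B → s.card = n → τ s = 0

/-- If `𝒜` is an uncountable non-overlapping family of finite subsets of `ω₁` and beyond
some `δ < ω₁` every finite subfamily can be met by a single 0-homogeneous set, then one
0-homogeneous set meets all but countably many members of `𝒜`. -/
theorem zero_homog_meets_almost_all
    (n : ℕ) (hn : 2 ≤ n)
    (𝒜 : Set (Finset Ordinal))
    (hsub : ∀ a ∈ 𝒜, (↑a : Set Ordinal) ⊆ Set.Iio omega1)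
    (hunc : ¬𝒜.Countable)
    (hno : ∀ a ∈ 𝒜, ∀ b ∈ 𝒜, a ≠ b →
      (∀ x ∈ a, ∀ y ∈ b, x < y) ∨ (∀ y ∈ b, ∀ x ∈ a, y < x))
    (τ : Finset Ordinal → ℕ)
    (hδ : ∃ δ, δ < omega1 ∧ ∀ 𝒳 : Finset (Finset Ordinal), ↑𝒳 ⊆ 𝒜 →
      (∀ a ∈ 𝒳, ∀ x ∈ a, δ ≤ x) →
      ∃ B : Set Ordinal, ZeroHomogeneous n τ B ∧ ∀ a ∈ 𝒳, ∃ x ∈ a, x ∈ B) :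
    ∃ B : Set Ordinal, ZeroHomogeneous n τ B ∧
      {a ∈ 𝒜 | ∀ x ∈ a, x ∉ B}.Countable := by
  classical
  obtain ⟨δ, hδ1, hδ2⟩ := hδ
  set P : Finset Ordinal → Prop := fun a => a ∈ 𝒜 ∧ ∀ x ∈ a, δ ≤ x with hPdef
  have key : ∀ 𝒳 : Finset (Finset Ordinal),
      ∃ B : Set Ordinal, ZeroHomogeneous n τ B ∧
        ∀ a ∈ 𝒳.filter P, ∃ x ∈ a, x ∈ B := by
    intro 𝒳
    refine hδ2 (𝒳.filter P) ?_ ?_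
    · intro a ha
      exact (Finset.mem_filter.mp ha).2.1
    · intro a ha
      exact (Finset.mem_filter.mp ha).2.2
  choose Bf hB1 hB2 using key
  -- each member of P is nonempty
  have hne : ∀ a, P a → a.Nonempty := by
    intro a pa
    obtain ⟨x, hx, -⟩ := hB2 {a} a (Finset.mem_filter.mpr ⟨Finset.mem_singleton_self a, pa⟩)
    exact ⟨x, hx⟩
  -- choose, for each a and each 𝒳, an element of a that lies in Bf 𝒳 when a ∈ 𝒳
  have hgex : ∀ (a : Finset Ordinal) (𝒳 : Finset (Finset Ordinal)),
      ∃ x, P a → x ∈ a ∧ (a ∈ 𝒳 → x ∈ Bf 𝒳) := by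
    intro a 𝒳
    by_cases pa : P a
    · by_cases h : a ∈ 𝒳
      · obtain ⟨x, hx, hxB⟩ := hB2 𝒳 a (Finset.mem_filter.mpr ⟨h, pa⟩)
        exact ⟨x, fun _ => ⟨hx, fun _ => hxB⟩⟩
      · obtain ⟨x, hx⟩ := hne a pa
        exact ⟨x, fun _ => ⟨hx, fun h' => absurd h' h⟩⟩
    · exact ⟨0, fun h => absurd h pa⟩
  choose g hg using hgex
  -- the ultrafilter
  haveI : Filter.NeBot (Filter.atTop : Filter (Finset (Finset Ordinal))) :=
    Filter.atTop_neBot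
  set U : Ultrafilter (Finset (Finset Ordinal)) := Ultrafilter.of Filter.atTop with hU
  have hUle : (U : Filter (Finset (Finset Ordinal))) ≤ Filter.atTop := Ultrafilter.of_le _
  have mem_a : ∀ a : Finset Ordinal, {𝒳 | a ∈ 𝒳} ∈ U := by
    intro a
    refine hUle ?_
    refine Filter.mem_atTop_sets.mpr ⟨{a}, fun b hb => ?_⟩
    exact Finset.singleton_subset_iff.mp hb
  -- pigeonhole over the ultrafilter
  have pigeon : ∀ a : Finset Ordinal, ∃ x, P a →
      (x ∈ a ∧ {𝒳 | g a 𝒳 = x} ∈ U) := by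
    intro a
    by_cases pa : P a
    · have hcov : (Set.univ : Set (Finset (Finset Ordinal))) ⊆
          ⋃ x ∈ (↑a : Set Ordinal), {𝒳 | g a 𝒳 = x} := by
        intro 𝒳 _
        exact Set.mem_biUnion ((hg a 𝒳 pa).1) rfl
      have : (⋃ x ∈ (↑a : Set Ordinal), {𝒳 | g a 𝒳 = x}) ∈ U :=
        Filter.mem_of_superset Filter.univ_mem hcov
      obtain ⟨x, hxa, hxU⟩ := (Ultrafilter.finite_biUnion_mem_iff a.finite_toSet).mp this
      exact ⟨x, fun _ => ⟨hxa, hxU⟩⟩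
    · exact ⟨0, fun h => absurd h pa⟩
  choose xf hxf using pigeon
  refine ⟨{y | ∃ a, P a ∧ xf a = y}, ?_, ?_⟩
  · -- 0-homogeneity
    intro s hs hcard
    have hchoice : ∀ y : Ordinal, ∃ a, y ∈ s → (P a ∧ xf a = y) := by
      intro y
      by_cases hy : y ∈ s
      · obtain ⟨a, ha⟩ := hs hy
        exact ⟨a, fun _ => ha⟩
      · exact ⟨∅, fun h => absurd h hy⟩
    choose aa haa using hchoice
    have hT : (⋂ y ∈ (↑s : Set Ordinal),
        ({𝒳 | aa y ∈ 𝒳} ∩ {𝒳 | g (aa y) 𝒳 = xf (aa y)})) ∈ U := by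
      refine (Filter.biInter_mem s.finite_toSet).mpr ?_
      intro y hy
      have hy' : y ∈ s := hy
      exact Filter.inter_mem (mem_a (aa y)) ((hxf (aa y) (haa y hy').1).2)
    obtain ⟨𝒳, h𝒳⟩ := Filter.nonempty_of_mem hT
    refine hB1 𝒳 s ?_ hcard
    intro y hy
    have hy' : y ∈ s := hy
    have h1 := Set.mem_iInter₂.mp h𝒳 y hy
    have hP := (haa y hy').1
    have hgy := (hg (aa y) 𝒳 hP).2 h1.1
    have : g (aa y) 𝒳 = y := by rw [h1.2, (haa y hy').2]
    rwa [this] at hgy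
  · -- countability
    have hsubS : {a ∈ 𝒜 | ∀ x ∈ a, x ∉ {y | ∃ a, P a ∧ xf a = y}} ⊆
        {a ∈ 𝒜 | ∃ x ∈ a, x < δ} := by
      intro a ⟨ha, hnB⟩
      refine ⟨ha, ?_⟩
      by_contra h
      push_neg at h
      have pa : P a := ⟨ha, fun x hx => h x hx⟩
      exact hnB (xf a) ((hxf a pa).1) ⟨a, pa, rfl⟩
    refine Set.Countable.mono hsubS ?_
    have hwex : ∀ a : Finset Ordinal, ∃ x, (a ∈ 𝒜 ∧ ∃ y ∈ a, y < δ) → (x ∈ a ∧ x < δ) := by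
      intro a
      by_cases h : a ∈ 𝒜 ∧ ∃ y ∈ a, y < δ
      · obtain ⟨y, hy, hyδ⟩ := h.2
        exact ⟨y, fun _ => ⟨hy, hyδ⟩⟩
      · exact ⟨0, fun h' => absurd h' h⟩
    choose w hw using hwex
    have hIio : (Set.Iio δ).Countable := by
      rw [Cardinal.countable_iff_lt_aleph_one]
      rw [Ordinal.mk_Iio_ordinal]
      have h1 : δ.card < Cardinal.aleph 1 := Cardinal.lt_ord.mp hδ1
      calc Cardinal.lift.{1} δ.card < Cardinal.lift.{1} (Cardinal.aleph 1) :=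
            Cardinal.lift_lt.mpr h1
        _ = Cardinal.aleph 1 := by
            rw [Cardinal.lift_aleph]; norm_num
    refine Set.MapsTo.countable_of_injOn (f := w) (t := Set.Iio δ) ?_ ?_ hIio
    · intro a ha
      exact (hw a ⟨ha.1, ha.2⟩).2
    · intro a ha b hb hab
      by_contra hne'
      obtain ⟨hwa, -⟩ := hw a ⟨ha.1, ha.2⟩
      obtain ⟨hwb, -⟩ := hw b ⟨hb.1, hb.2⟩
      rcases hno a ha.1 b hb.1 hne' with h | h
      · exact absurd hab (ne_of_lt (h (w a) hwa (w b) hwb))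
      · exact absurd hab.symm (ne_of_lt (h (w b) hwb (w a) hwa))
end

section
/- Let n ≥ 2 and let ℙ be a ccc poset. Then ℙ is σ-n-linked if and only if the poset ℋ_{ℙ,n} of finite n-linked subsets of ℙ (ordered by reverse inclusion) is σ-n-linked. -/
/-- `F` is a member of `ℋ_{ℙ,n}`: a finite `n`-linked subset of `ℙ` (every subset with at
most `n` elements has a common lower bound). -/
def MemHPn {P : Type*} [PartialOrder P] (n : ℕ) (F : Finset P) : Prop :=
  ∀ s ⊆ F, s.card ≤ n → ∃ p, ∀ q ∈ s, p ≤ q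

/-- For `n ≥ 2` and a ccc poset `ℙ`: `ℙ` is σ-n-linked iff the poset `ℋ_{ℙ,n}` of finite
`n`-linked subsets of `ℙ` (ordered by reverse inclusion, common lower bounds being common
supersets in `ℋ_{ℙ,n}`) is σ-n-linked. -/
theorem sigma_n_linked_iff_HPn_sigma_n_linked
    (P : Type*) [PartialOrder P] (n : ℕ) (hn : 2 ≤ n)
    (hccc : ∀ X : Set P, ¬X.Countable →
      ∃ p ∈ X, ∃ q ∈ X, p ≠ q ∧ ∃ r, r ≤ p ∧ r ≤ q) :
    (∃ f : P → ℕ, ∀ (m : ℕ) (s : Finset P), (∀ q ∈ s, f q = m) → s.card ≤ n →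
        ∃ p, ∀ q ∈ s, p ≤ q) ↔
    (∃ g : Finset P → ℕ, ∀ (m : ℕ) (t : Finset (Finset P)),
        (∀ F ∈ t, MemHPn n F ∧ g F = m) → t.card ≤ n →
        ∃ H : Finset P, MemHPn n H ∧ ∀ F ∈ t, F ⊆ H) := by
  classical
  constructor
  · rintro ⟨f, hf⟩
    obtain ⟨p₀, -⟩ := hf 0 ∅ (by simp) (by simp)
    -- a canonical choice of lower bound for a finite set, when one exists
    set lbOf : Finset P → P := fun S =>
      if h : ∃ p, ∀ q ∈ S, p ≤ q then h.choose else p₀ with hlbOf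
    have hlb : ∀ S : Finset P, (∃ p, ∀ q ∈ S, p ≤ q) → ∀ q ∈ S, lbOf S ≤ q := by
      intro S h q hq
      simp only [hlbOf, dif_pos h]
      exact h.choose_spec q hq
    -- canonical enumeration of a finite set
    set idx : Finset P → ℕ → P := fun F i => F.toList.getD i p₀ with hidxdef
    have hidxmem : ∀ (F : Finset P) (i : ℕ), i < F.card → idx F i ∈ F := by
      intro F i hi
      have hi' : i < F.toList.length := by
        simpa [Finset.length_toList] using hi
      have : idx F i = F.toList[i] := List.getD_eq_getElem F.toList p₀ hi'
      rw [this]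
      exact Finset.mem_toList.mp (List.getElem_mem hi')
    -- the color pattern of a finite set
    set c : Finset P → Finset ℕ → ℕ := fun F A => f (lbOf (A.image (idx F))) with hcdef
    set data : Finset P → ℕ × Multiset (Finset ℕ × ℕ) := fun F =>
      (F.card, (Finset.range F.card).powerset.val.map fun A => (A, c F A)) with hdatadef
    refine ⟨fun F => Encodable.encode (data F), ?_⟩
    intro m t ht htn
    have hdata : ∀ F ∈ t, ∀ G ∈ t, data F = data G := by
      intro F hF G hG
      exact Encodable.encode_injective ((ht F hF).2.trans (ht G hG).2.symm)
    have hcardeq : ∀ F ∈ t, ∀ G ∈ t, F.card = G.card := by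
      intro F hF G hG
      exact congrArg Prod.fst (hdata F hF G hG)
    have hceq : ∀ F ∈ t, ∀ G ∈ t, ∀ A : Finset ℕ, A ⊆ Finset.range F.card →
        c F A = c G A := by
      intro F hF G hG A hAr
      have h1 := congrArg Prod.snd (hdata F hF G hG)
      simp only [hdatadef] at h1
      have hmem : ((A, c F A) : Finset ℕ × ℕ) ∈
          (Finset.range F.card).powerset.val.map (fun A => (A, c F A)) :=
        Multiset.mem_map.mpr ⟨A, Finset.mem_val.mpr (Finset.mem_powerset.mpr hAr), rfl⟩
      rw [h1] at hmem
      obtain ⟨A', _, hEq⟩ := Multiset.mem_map.mp hmem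
      have hA' : A' = A := congrArg Prod.fst hEq
      have := congrArg Prod.snd hEq
      rw [hA'] at this
      exact this.symm
    refine ⟨t.sup id, ?_, fun F hF => Finset.le_sup (f := id) hF⟩
    intro s hs hsn
    rcases eq_or_ne s ∅ with rfl | hne
    · exact ⟨p₀, by simp⟩
    -- pick, for each p ∈ s, a set Fp ∈ t containing it, with its index there
    have hFp : ∀ p ∈ s, ∃ F ∈ t, p ∈ F := by
      intro p hp
      simpa using Finset.mem_sup.mp (hs hp)
    choose Fp hFpt hFpm using hFp
    have hidx : ∀ (p : P) (hp : p ∈ s), ∃ i < (Fp p hp).card, idx (Fp p hp) i = p := by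
      intro p hp
      have hmem : p ∈ (Fp p hp).toList := Finset.mem_toList.mpr (hFpm p hp)
      obtain ⟨i, hi, hip⟩ := List.mem_iff_getElem.mp hmem
      refine ⟨i, by simpa [Finset.length_toList] using hi, ?_⟩
      rw [hidxdef]
      simpa using (List.getD_eq_getElem _ p₀ hi).trans hip
    choose ip hip hidxp using hidx
    obtain ⟨p₁, hp₁⟩ := Finset.nonempty_iff_ne_empty.mpr hne
    set k := (Fp p₁ hp₁).card with hk
    have hcard : ∀ F ∈ t, F.card = k := fun F hF => hcardeq F hF _ (hFpt p₁ hp₁)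
    -- the common index pattern
    set A : Finset ℕ := s.attach.image (fun p => ip p.1 p.2) with hAdef
    have hAsub : ∀ p (hp : p ∈ s), A ⊆ Finset.range (Fp p hp).card := by
      intro p hp i hi
      rw [Finset.mem_range, hcard _ (hFpt p hp)]
      simp only [hAdef, Finset.mem_image] at hi
      obtain ⟨q, -, rfl⟩ := hi
      calc ip q.1 q.2 < (Fp q.1 q.2).card := hip q.1 q.2
        _ = k := hcard _ (hFpt q.1 q.2)
    have hAcard : A.card ≤ n := le_trans (Finset.card_image_le.trans (by simp)) hsn
    -- the chosen lower bounds
    set r : (p : P) → p ∈ s → P := fun p hp => lbOf (A.image (idx (Fp p hp))) with hrdef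
    have hSsub : ∀ p (hp : p ∈ s), A.image (idx (Fp p hp)) ⊆ Fp p hp := by
      intro p hp q hq
      simp only [Finset.mem_image] at hq
      obtain ⟨i, hi, rfl⟩ := hq
      exact hidxmem _ i (Finset.mem_range.mp (hAsub p hp hi))
    have hSex : ∀ p (hp : p ∈ s), ∃ w, ∀ q ∈ A.image (idx (Fp p hp)), w ≤ q := by
      intro p hp
      exact (ht _ (hFpt p hp)).1 _ (hSsub p hp) (le_trans Finset.card_image_le hAcard)
    have hrle : ∀ p (hp : p ∈ s), r p hp ≤ p := by
      intro p hp
      refine hlb _ (hSex p hp) p ?_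
      exact Finset.mem_image.mpr ⟨ip p hp, Finset.mem_image.mpr ⟨⟨p, hp⟩, Finset.mem_attach _ _, rfl⟩, hidxp p hp⟩
    have hrcol : ∀ p (hp : p ∈ s), f (r p hp) = c (Fp p₁ hp₁) A := by
      intro p hp
      have : f (r p hp) = c (Fp p hp) A := by rw [hrdef, hcdef]
      rw [this]
      exact hceq _ (hFpt p hp) _ (hFpt p₁ hp₁) A (hAsub p hp)
    -- the final common lower bound
    set R : Finset P := s.attach.image (fun p => r p.1 p.2) with hRdef
    have hcolR : ∀ q ∈ R, f q = c (Fp p₁ hp₁) A := by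
      intro q hq
      simp only [hRdef, Finset.mem_image] at hq
      obtain ⟨p, -, rfl⟩ := hq
      exact hrcol p.1 p.2
    have hcardR : R.card ≤ n := le_trans (Finset.card_image_le.trans (by simp)) hsn
    obtain ⟨w, hw⟩ := hf (c (Fp p₁ hp₁) A) R hcolR hcardR
    refine ⟨w, fun q hq => ?_⟩
    have hqR : r q hq ∈ R := by
      rw [hRdef]
      exact Finset.mem_image.mpr ⟨⟨q, hq⟩, Finset.mem_attach _ _, rfl⟩
    exact le_trans (hw _ hqR) (hrle q hq)
  · rintro ⟨g, hg⟩
    refine ⟨fun p => g {p}, ?_⟩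
    intro m s hs hsn
    obtain ⟨H, hH, hsub⟩ := hg m (s.image fun p => ({p} : Finset P))
      (by
        intro F hF
        obtain ⟨p, hp, rfl⟩ := Finset.mem_image.mp hF
        refine ⟨?_, hs p hp⟩
        intro u hu _
        exact ⟨p, fun q hq => le_of_eq (Finset.mem_singleton.mp (hu hq)).symm⟩)
      (le_trans Finset.card_image_le hsn)
    refine hH s ?_ hsn
    intro p hp
    exact hsub _ (Finset.mem_image_of_mem _ hp) (Finset.mem_singleton_self p)
end

section
/- Let B = {f_α ∈ ω^ω : α < ω₁} be a <*-increasing ω₁-family of strictly increasing functions, and fix n ≥ 2. Call F ∈ [B]^{<ω} n-splitting if for every s ∈ ω^{<ω}, |{g(|s|) : g ∈ F, s ⊂ g}| ≤ n. Then the poset ℙ of n-splitting finite subsets of B ordered by reverse inclusion is σ-n-linked, and any uncountable X ⊆ B with all (n+1)-element subsets n-splitting is an n-splitting family, hence has a <*-upper bound. -/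
/-- `X` is an `n`-splitting family of functions: for every finite sequence `s` (of length
`l`), at most `n` distinct values occur as `g l` for `g ∈ X` extending `s`. -/
def NSplitting (n : ℕ) (X : Set (ℕ → ℕ)) : Prop :=
  ∀ (l : ℕ) (s : ℕ → ℕ), ∃ V : Finset ℕ, V.card ≤ n ∧
    ∀ g ∈ X, (∀ i, i < l → g i = s i) → g l ∈ V

/-- The first `N` values of `g`, as a list. -/
def trace (N : ℕ) (g : ℕ → ℕ) : List ℕ := (List.range N).map g

lemma trace_eq_iff {N : ℕ} {g g' : ℕ → ℕ} :
    trace N g = trace N g' ↔ ∀ k < N, g k = g' k := by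
  simp [trace, List.map_inj_left, List.mem_range]

/-- For any finite set of functions, some finite trace length separates them. -/
lemma exists_injOn_trace (F : Finset (ℕ → ℕ)) :
    ∃ N, Set.InjOn (trace N) ↑F := by
  classical
  have key : ∀ g g' : ℕ → ℕ, g ≠ g' → ∃ k, g k ≠ g' k := by
    intro g g' h
    by_contra hc
    push_neg at hc
    exact h (funext hc)
  set D : (ℕ → ℕ) → (ℕ → ℕ) → ℕ := fun g g' =>
    if h : ∃ k, g k ≠ g' k then h.choose + 1 else 0 with hD
  refine ⟨(F ×ˢ F).sup (fun p => D p.1 p.2), ?_⟩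
  intro g hg g' hg' he
  by_contra hne
  obtain hex := key g g' hne
  have hk : g hex.choose ≠ g' hex.choose := hex.choose_spec
  have hlt : hex.choose < (F ×ˢ F).sup (fun p => D p.1 p.2) := by
    have : D g g' = hex.choose + 1 := by simp [hD, dif_pos hex]
    have hmem : (g, g') ∈ F ×ˢ F :=
      Finset.mem_product.2 ⟨Finset.mem_coe.1 hg, Finset.mem_coe.1 hg'⟩
    have hle : D g g' ≤ (F ×ˢ F).sup (fun p => D p.1 p.2) :=
      Finset.le_sup (f := fun p => D p.1 p.2) hmem
    omega
  exact hk (trace_eq_iff.1 he _ hlt)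

noncomputable def traceLen (F : Finset (ℕ → ℕ)) : ℕ :=
  (exists_injOn_trace F).choose

lemma traceLen_injOn (F : Finset (ℕ → ℕ)) :
    Set.InjOn (trace (traceLen F)) ↑F :=
  (exists_injOn_trace F).choose_spec

noncomputable def colour (F : Finset (ℕ → ℕ)) : ℕ :=
  Encodable.encode ((traceLen F, F.image (trace (traceLen F))) : ℕ × Finset (List ℕ))

lemma colour_eq {F F' : Finset (ℕ → ℕ)} (h : colour F = colour F') :
    traceLen F = traceLen F' ∧
      F.image (trace (traceLen F)) = F'.image (trace (traceLen F')) := by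
  have := Encodable.encode_injective h
  exact ⟨congrArg Prod.fst this, congrArg Prod.snd this⟩

/-- An n-splitting family has finitely many traces of each length. -/
lemma traces_finite {n : ℕ} {X : Set (ℕ → ℕ)} (hX : NSplitting n X) (l : ℕ) :
    {r : List ℕ | ∃ g ∈ X, trace l g = r}.Finite := by
  classical
  induction l with
  | zero =>
    apply Set.Finite.subset (Set.finite_singleton ([] : List ℕ))
    rintro r ⟨g, _, rfl⟩
    simp [trace]
  | succ l ih =>
    set Fl := ih.toFinset with hFl
    set V : List ℕ → Finset ℕ := fun r => (hX l (fun i => r.getD i 0)).choose with hV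
    apply Set.Finite.subset (Fl.biUnion (fun r => (V r).image (fun v => r ++ [v]))).finite_toSet
    rintro r ⟨g, hg, rfl⟩
    have hmem : trace l g ∈ Fl := by
      rw [hFl, Set.Finite.mem_toFinset]
      exact ⟨g, hg, rfl⟩
    have hext : ∀ i, i < l → g i = (trace l g).getD i 0 := by
      intro i hi
      simp [trace, List.getD, List.getElem?_map, List.getElem?_range hi]
    have hgl : g l ∈ V (trace l g) :=
      (hX l (fun i => (trace l g).getD i 0)).choose_spec.2 g hg hext
    have : trace (l + 1) g = trace l g ++ [g l] := by
      simp [trace, List.range_succ]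
    rw [this]
    simp only [Finset.coe_biUnion, Set.mem_iUnion, Finset.mem_coe, Finset.mem_image]
    exact ⟨trace l g, hmem, g l, hgl, rfl⟩

/-- An n-splitting family is pointwise bounded at each level. -/
lemma levels_finite {n : ℕ} {X : Set (ℕ → ℕ)} (hX : NSplitting n X) (l : ℕ) :
    {v : ℕ | ∃ g ∈ X, g l = v}.Finite := by
  classical
  set Fl := (traces_finite hX l).toFinset with hFl
  set V : List ℕ → Finset ℕ := fun r => (hX l (fun i => r.getD i 0)).choose with hV
  apply Set.Finite.subset (Fl.biUnion V).finite_toSet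
  rintro v ⟨g, hg, rfl⟩
  have hmem : trace l g ∈ Fl := by
    rw [hFl, Set.Finite.mem_toFinset]; exact ⟨g, hg, rfl⟩
  have hext : ∀ i, i < l → g i = (trace l g).getD i 0 := by
    intro i hi
    simp [trace, List.getD, List.getElem?_map, List.getElem?_range hi]
  have hgl : g l ∈ V (trace l g) :=
    (hX l (fun i => (trace l g).getD i 0)).choose_spec.2 g hg hext
  simp only [Finset.coe_biUnion, Set.mem_iUnion, Finset.mem_coe]
  exact ⟨trace l g, hmem, hgl⟩

/-- An n-splitting family has a (strict, everywhere) upper bound. -/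
lemma nsplitting_bounded {n : ℕ} {X : Set (ℕ → ℕ)} (hX : NSplitting n X) :
    ∃ h : ℕ → ℕ, ∀ g ∈ X, {k : ℕ | h k ≤ g k}.Finite := by
  classical
  refine ⟨fun l => (levels_finite hX l).toFinset.sup id + 1, ?_⟩
  intro g hg
  have : {k : ℕ | (levels_finite hX k).toFinset.sup id + 1 ≤ g k} = ∅ := by
    ext k
    simp only [Set.mem_setOf_eq, Set.mem_empty_iff_false, iff_false, not_le]
    have : g k ∈ (levels_finite hX k).toFinset := by
      rw [Set.Finite.mem_toFinset]; exact ⟨g, hg, rfl⟩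
    have h2 := Finset.le_sup (f := id) this
    simp only [id] at h2
    omega
  rw [this]; exact Set.finite_empty

/-- For a `<*`-increasing `ω₁`-family `B = {f_α}` of strictly increasing functions and
`n ≥ 2`: (1) the poset of `n`-splitting finite subsets of `B` ordered by reverse inclusion
is σ-n-linked (common lower bounds being `n`-splitting common supersets within `B`), and
(2) every uncountable `X ⊆ B` all of whose `(n+1)`-element subsets are `n`-splitting is
itself `n`-splitting and has a `<*`-upper bound. -/

theorem splitting_poset_sigma_n_linked
    (n : ℕ) (hn : 2 ≤ n)
    (f : Ordinal → ℕ → ℕ)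
    (hmono : ∀ α, α < omega1 → StrictMono (f α))
    (hinc : ∀ α β : Ordinal, α < β → β < omega1 → {k : ℕ | f β k ≤ f α k}.Finite) :
    (∃ c : Finset (ℕ → ℕ) → ℕ,
      ∀ (m : ℕ) (t : Finset (Finset (ℕ → ℕ))),
        (∀ F ∈ t, ((∀ g ∈ F, ∃ α, α < omega1 ∧ g = f α) ∧ NSplitting n ↑F) ∧ c F = m) →
        t.card ≤ n →
        ∃ H : Finset (ℕ → ℕ),
          ((∀ g ∈ H, ∃ α, α < omega1 ∧ g = f α) ∧ NSplitting n ↑H) ∧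
          ∀ F ∈ t, F ⊆ H) ∧
    (∀ X : Set (ℕ → ℕ), (∀ g ∈ X, ∃ α, α < omega1 ∧ g = f α) → ¬X.Countable →
      (∀ s : Finset (ℕ → ℕ), ↑s ⊆ X → s.card = n + 1 → NSplitting n ↑s) →
      NSplitting n X ∧ ∃ h : ℕ → ℕ, ∀ g ∈ X, {k : ℕ | h k ≤ g k}.Finite) := by
  classical
  constructor
  · -- σ-n-linked
    refine ⟨colour, ?_⟩
    intro m t ht htn
    rcases t.eq_empty_or_nonempty with rfl | ⟨F₀, hF₀⟩
    · exact ⟨∅, ⟨by simp, fun l s => ⟨∅, by simp, by simp⟩⟩, by simp⟩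
    set N₀ := traceLen F₀ with hN₀
    set R := F₀.image (trace N₀) with hR
    have hsame : ∀ F ∈ t, traceLen F = N₀ ∧ F.image (trace N₀) = R := by
      intro F hF
      have hc : colour F = colour F₀ := by
        rw [(ht F hF).2, (ht F₀ hF₀).2]
      obtain ⟨h1, h2⟩ := colour_eq hc
      rw [show traceLen F = N₀ from h1] at h2
      exact ⟨h1, h2⟩
    set H := t.sup id with hH
    have memH : ∀ g, g ∈ H ↔ ∃ F ∈ t, g ∈ F := by
      intro g; rw [hH]; exact Finset.mem_sup
    refine ⟨H, ⟨⟨?_, ?_⟩, ?_⟩⟩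
    · -- H ⊆ B
      intro g hg
      obtain ⟨F, hF, hgF⟩ := (memH g).1 hg
      exact (ht F hF).1.1 g hgF
    · -- H is n-splitting
      intro l s
      by_cases hl : l < N₀
      · obtain ⟨V, hVc, hV⟩ := (ht F₀ hF₀).1.2 l s
        refine ⟨V, hVc, ?_⟩
        intro g hg hgs
        obtain ⟨F, hF, hgF⟩ := (memH g).1 hg
        have htr : trace N₀ g ∈ R := by
          rw [← (hsame F hF).2]
          exact Finset.mem_image_of_mem _ hgF
        rw [hR] at htr
        obtain ⟨g₀, hg₀F, hg₀⟩ := Finset.mem_image.1 htr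
        have hagree : ∀ k < N₀, g₀ k = g k := trace_eq_iff.1 hg₀
        have hg₀s : ∀ i, i < l → g₀ i = s i := by
          intro i hi
          rw [hagree i (hi.trans hl)]
          exact hgs i hi
        have := hV g₀ hg₀F hg₀s
        rwa [hagree l hl] at this
      · push_neg at hl
        set P : (ℕ → ℕ) → Prop := fun g => ∀ i, i < l → g i = s i with hP
        refine ⟨(H.filter P).image (fun g => g l), ?_, ?_⟩
        · apply le_trans Finset.card_image_le
          apply le_trans _ htn
          set φ : (ℕ → ℕ) → Finset (ℕ → ℕ) := fun g =>
            if h : ∃ F, F ∈ t ∧ g ∈ F then h.choose else ∅ with hφ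
          apply Finset.card_le_card_of_injOn φ
          · intro g hg
            have hgH := Finset.mem_filter.1 hg
            have hex : ∃ F, F ∈ t ∧ g ∈ F := by
              obtain ⟨F, hF, hgF⟩ := (memH g).1 hgH.1
              exact ⟨F, hF, hgF⟩
            simp only [hφ, dif_pos hex]
            exact hex.choose_spec.1
          · intro g hg g' hg' he
            have hgf := Finset.mem_filter.1 (Finset.mem_coe.1 hg)
            have hgf' := Finset.mem_filter.1 (Finset.mem_coe.1 hg')
            have hex : ∃ F, F ∈ t ∧ g ∈ F := (memH g).1 hgf.1
            have hex' : ∃ F, F ∈ t ∧ g' ∈ F := (memH g').1 hgf'.1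
            simp only [hφ, dif_pos hex, dif_pos hex'] at he
            have hgF : g ∈ hex.choose := hex.choose_spec.2
            have hg'F : g' ∈ hex.choose := he ▸ hex'.choose_spec.2
            have hFt : hex.choose ∈ t := hex.choose_spec.1
            have hinj : Set.InjOn (trace N₀) ↑hex.choose := by
              have := traceLen_injOn hex.choose
              rwa [(hsame _ hFt).1] at this
            apply hinj hgF hg'F
            rw [trace_eq_iff]
            intro k hk
            rw [hgf.2 k (lt_of_lt_of_le hk hl), hgf'.2 k (lt_of_lt_of_le hk hl)]
        · intro g hg hgs
          apply Finset.mem_image_of_mem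
          exact Finset.mem_filter.2 ⟨hg, hgs⟩
    · -- t ⊆ H pieces
      intro F hF
      have : id F ≤ t.sup id := Finset.le_sup hF
      exact this
  · -- part 2
    intro X _ _ hsub
    have hXsplit : NSplitting n X := by
      intro l s
      set S : Set ℕ := {v | ∃ g ∈ X, (∀ i, i < l → g i = s i) ∧ g l = v} with hS
      have hcard : ∀ T : Finset ℕ, ↑T ⊆ S → T.card ≤ n := by
        intro T hTS
        by_contra hc
        push_neg at hc
        obtain ⟨T', hT'T, hT'c⟩ := Finset.exists_subset_card_eq hc
        set φ : ℕ → (ℕ → ℕ) := fun v =>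
          if h : ∃ g, g ∈ X ∧ (∀ i, i < l → g i = s i) ∧ g l = v then h.choose else id
          with hφ
        have hφspec : ∀ v ∈ T', φ v ∈ X ∧ (∀ i, i < l → φ v i = s i) ∧ φ v l = v := by
          intro v hv
          have hvS : v ∈ S := hTS (hT'T hv)
          rw [hS, Set.mem_setOf_eq] at hvS
          have hex : ∃ g, g ∈ X ∧ (∀ i, i < l → g i = s i) ∧ g l = v := by
            obtain ⟨g, hg, h1, h2⟩ := hvS; exact ⟨g, hg, h1, h2⟩
          simp only [hφ, dif_pos hex]
          exact hex.choose_spec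
        set G := T'.image φ with hG
        have hGcard : G.card = n + 1 := by
          rw [hG, Finset.card_image_of_injOn, hT'c]
          intro v hv v' hv' he
          rw [← (hφspec v (Finset.mem_coe.1 hv)).2.2,
              ← (hφspec v' (Finset.mem_coe.1 hv')).2.2, he]
        have hGX : ↑G ⊆ X := by
          intro g hg
          obtain ⟨v, hv, rfl⟩ := Finset.mem_image.1 (Finset.mem_coe.1 hg)
          exact (hφspec v hv).1
        obtain ⟨V, hVc, hV⟩ := hsub G hGX hGcard l s
        have hT'V : T' ⊆ V := by
          intro v hv
          have := hV (φ v) (Finset.mem_image_of_mem _ hv) (hφspec v hv).2.1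
          rwa [(hφspec v hv).2.2] at this
        have := Finset.card_le_card hT'V
        omega
      have hSfin : S.Finite := by
        by_contra hinf
        obtain ⟨T, hTS, hTc⟩ := Set.Infinite.exists_subset_card_eq hinf (n + 1)
        have := hcard T hTS
        omega
      refine ⟨hSfin.toFinset, ?_, ?_⟩
      · apply hcard
        rw [Set.Finite.coe_toFinset]
      · intro g hg hgs
        rw [Set.Finite.mem_toFinset]
        exact ⟨g, hg, hgs, rfl⟩
    exact ⟨hXsplit, nsplitting_bounded hXsplit⟩
end

section
/- Let T = {t_α : α < ω₁} be a tower and I ∈ [ω]^ω with t_α ∩ I_m ≠ ∅ for all α < ω₁ and m < ω, where I_m = [I(m), I(m+1)). Fix n ≥ 2 and let ℙ_{T,I} be the poset of finite F ⊆ ω₁ such that for every m < ω, the partial order ({t_α ∩ I_m : α ∈ F}, ⊆) has width at most n, ordered by reverse inclusion. Then ℙ_{T,I} is σ-n-linked. -/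
/-- The partial order `({t_α ∩ I_m : α ∈ F}, ⊆)` has width at most `n`: every antichain
(finite set of pairwise `⊆`-incomparable elements) among these sets has size `≤ n`. -/
def WidthLE (n : ℕ) (t : Ordinal → Set ℕ) (I : ℕ → ℕ) (F : Finset Ordinal) : Prop :=
  ∀ m : ℕ, ∀ S : Finset (Set ℕ),
    (∀ x ∈ S, ∃ α ∈ F, x = t α ∩ Set.Ico (I m) (I (m + 1))) →
    (∀ x ∈ S, ∀ y ∈ S, x ≠ y → ¬x ⊆ y) →
    S.card ≤ n

/-- Membership in the poset `ℙ_{T,I}`. -/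
def MemPTI (n : ℕ) (t : Ordinal → Set ℕ) (I : ℕ → ℕ) (F : Finset Ordinal) : Prop :=
  (↑F : Set Ordinal) ⊆ Set.Iio omega1 ∧ WidthLE n t I F

/-- For a tower `T = {t_α : α < ω₁}` and `I ∈ [ω]^ω` with `t_α ∩ I_m ≠ ∅` for all `α, m`,
the poset `ℙ_{T,I}` of finite `F ⊆ ω₁` such that each `({t_α ∩ I_m : α ∈ F}, ⊆)` has width
at most `n`, ordered by reverse inclusion, is σ-n-linked. -/
theorem tower_poset_sigma_n_linked
    (n : ℕ) (hn : 2 ≤ n)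
    (t : Ordinal → Set ℕ)
    (htinf : ∀ α, α < omega1 → (t α).Infinite)
    (htower : ∀ α β : Ordinal, α < β → β < omega1 → (t β \ t α).Finite)
    (I : ℕ → ℕ) (hI : StrictMono I)
    (hmeet : ∀ α, α < omega1 → ∀ m : ℕ, (t α ∩ Set.Ico (I m) (I (m + 1))).Nonempty) :
    ∃ c : Finset Ordinal → ℕ,
      ∀ (m : ℕ) (s : Finset (Finset Ordinal)),
        (∀ F ∈ s, MemPTI n t I F ∧ c F = m) → s.card ≤ n →
        ∃ H : Finset Ordinal, MemPTI n t I H ∧ ∀ F ∈ s, F ⊆ H := by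
  classical
  -- `P F m` says that beyond stage `m`, the traces of `F` on the intervals form chains.
  set P : Finset Ordinal → ℕ → Prop := fun F m =>
    ∀ α ∈ F, ∀ β ∈ F, α < β → (t β \ t α) ⊆ Set.Iio (I m) with hPdef
  have hPmono : ∀ F : Finset Ordinal, ∀ m m' : ℕ, m ≤ m' → P F m → P F m' := by
    intro F m m' hmm h α hα β hβ hab
    exact (h α hα β hβ hab).trans (Set.Iio_subset_Iio (hI.monotone hmm))
  have hex : ∀ F : Finset Ordinal, (↑F : Set Ordinal) ⊆ Set.Iio omega1 → ∃ m, P F m := by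
    intro F hF
    have hpair : ∀ α β : Ordinal,
        ∃ m, (α ∈ F → β ∈ F → α < β → (t β \ t α) ⊆ Set.Iio (I m)) := by
      intro α β
      by_cases h : α ∈ F ∧ β ∈ F ∧ α < β
      · obtain ⟨hα, hβ, hab⟩ := h
        obtain ⟨N, hN⟩ := (htower α β hab (hF hβ)).bddAbove
        refine ⟨N + 1, fun _ _ _ x hx => ?_⟩
        have hx1 : x ≤ N := hN hx
        have hx2 : x < N + 1 := Nat.lt_succ_of_le hx1
        exact lt_of_lt_of_le hx2 (hI.le_apply)
      · exact ⟨0, fun h1 h2 h3 => absurd ⟨h1, h2, h3⟩ h⟩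
    choose mf hmf using hpair
    refine ⟨F.sup (fun α => F.sup (mf α)), ?_⟩
    intro α hα β hβ hab
    have hle : mf α β ≤ F.sup (fun α => F.sup (mf α)) :=
      le_trans (Finset.le_sup (f := mf α) hβ) (Finset.le_sup (f := fun α => F.sup (mf α)) hα)
    exact (hmf α β hα hβ hab).trans (Set.Iio_subset_Iio (hI.monotone hle))
  -- the cut-off stage
  set mc : Finset Ordinal → ℕ := fun F => if h : ∃ m, P F m then h.choose else 0 with hmcdef
  have hmc : ∀ F : Finset Ordinal, (↑F : Set Ordinal) ⊆ Set.Iio omega1 → P F (mc F) := by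
    intro F hF
    have h := hex F hF
    simp only [hmcdef, dif_pos h]
    exact h.choose_spec
  -- the finite trace
  set tr : Ordinal → ℕ → Finset ℕ :=
    fun α m => (Finset.range (I m)).filter (fun x => x ∈ t α) with htrdef
  refine ⟨fun F => Encodable.encode
      (mc F, (F.sort (· ≤ ·)).map (fun α => tr α (mc F))), ?_⟩
  intro m s hmem hcard
  refine ⟨s.sup id, ⟨?_, ?_⟩, ?_⟩
  · -- bounded by ω₁
    intro α hα
    simp only [Finset.mem_coe, Finset.mem_sup, id] at hα
    obtain ⟨F, hF, hαF⟩ := hα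
    exact (hmem F hF).1.1 hαF
  · -- width ≤ n
    intro m₀ S hS1 hS2
    rcases s.eq_empty_or_nonempty with hs | ⟨F₀, hF₀⟩
    · have : S = ∅ := by
        refine Finset.eq_empty_of_forall_notMem fun x hx => ?_
        obtain ⟨α, hα, -⟩ := hS1 x hx
        simp [hs] at hα
      simp [this]
    -- all members of `s` share the same data
    have hsame : ∀ F ∈ s, mc F = mc F₀ ∧
        (F.sort (· ≤ ·)).map (fun α => tr α (mc F)) =
        (F₀.sort (· ≤ ·)).map (fun α => tr α (mc F₀)) := by
      intro F hF
      have h1 := (hmem F hF).2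
      have h2 := (hmem F₀ hF₀).2
      have := h1.trans h2.symm
      have hpair := Encodable.encode_injective this
      exact ⟨congrArg Prod.fst hpair, congrArg Prod.snd hpair⟩
    -- every element of the union lies in some F ∈ s
    have hmemsup : ∀ α ∈ s.sup id, ∃ F ∈ s, α ∈ F := by
      intro α hα
      simpa only [Finset.mem_sup, id] using hα
    by_cases hcase : mc F₀ ≤ m₀
    · -- beyond the cut-off: traces form chains, at most one antichain element per chain
      set f : Set ℕ → Finset Ordinal := fun x =>
        if h : ∃ F ∈ s, ∃ α ∈ F, x = t α ∩ Set.Ico (I m₀) (I (m₀ + 1)) then h.choose else ∅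
        with hfdef
      have hwitness : ∀ x ∈ S,
          ∃ F ∈ s, ∃ α ∈ F, x = t α ∩ Set.Ico (I m₀) (I (m₀ + 1)) := by
        intro x hx
        obtain ⟨α, hα, hxα⟩ := hS1 x hx
        obtain ⟨F, hF, hαF⟩ := hmemsup α hα
        exact ⟨F, hF, α, hαF, hxα⟩
      have hfmem : ∀ x ∈ S, f x ∈ s := by
        intro x hx
        have h := hwitness x hx
        simp only [hfdef, dif_pos h]
        exact h.choose_spec.1
      have hfprop : ∀ x ∈ S, ∃ α ∈ f x, x = t α ∩ Set.Ico (I m₀) (I (m₀ + 1)) := by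
        intro x hx
        have h := hwitness x hx
        simp only [hfdef, dif_pos h]
        exact h.choose_spec.2
      -- within one F, traces are ⊆-comparable
      have hchain : ∀ F ∈ s, ∀ α ∈ F, ∀ β ∈ F, α < β →
          t β ∩ Set.Ico (I m₀) (I (m₀ + 1)) ⊆ t α ∩ Set.Ico (I m₀) (I (m₀ + 1)) := by
        intro F hF α hα β hβ hab x hx
        have hPF : P F m₀ := by
          have := hmc F (hmem F hF).1.1
          rw [(hsame F hF).1] at this
          exact hPmono F (mc F₀) m₀ hcase this
        refine ⟨?_, hx.2⟩
        by_contra hxa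
        have : x ∈ t β \ t α := ⟨hx.1, hxa⟩
        have := hPF α hα β hβ hab this
        exact absurd hx.2.1 (not_le.mpr this)
      have hinj : Set.InjOn f S := by
        intro x hx y hy hxy
        obtain ⟨α, hαf, hxα⟩ := hfprop x hx
        obtain ⟨β, hβf, hyβ⟩ := hfprop y hy
        rw [hxy] at hαf
        by_contra hne
        rcases lt_trichotomy α β with h | h | h
        · have := hchain (f y) (hfmem y hy) α hαf β hβf h
          rw [← hxα, ← hyβ] at this
          exact hS2 y hy x hx (Ne.symm hne) this
        · exact hne (by rw [hxα, hyβ, h])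
        · have := hchain (f y) (hfmem y hy) β hβf α hαf h
          rw [← hxα, ← hyβ] at this
          exact hS2 x hx y hy hne this
      calc S.card ≤ s.card := Finset.card_le_card_of_injOn f hfmem hinj
        _ ≤ n := hcard
    · -- below the cut-off: all traces already appear in F₀
      push_neg at hcase
      refine (hmem F₀ hF₀).1.2 m₀ S ?_ hS2
      intro x hx
      obtain ⟨α, hα, hxα⟩ := hS1 x hx
      obtain ⟨F, hF, hαF⟩ := hmemsup α hα
      -- the trace of α appears in the trace list of F₀
      have htr : ∃ α' ∈ F₀, tr α' (mc F₀) = tr α (mc F₀) := by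
        have hlist := (hsame F hF).2
        rw [(hsame F hF).1] at hlist
        have hαs : α ∈ F.sort (· ≤ ·) := (Finset.mem_sort _).mpr hαF
        have : tr α (mc F₀) ∈ (F₀.sort (· ≤ ·)).map (fun α => tr α (mc F₀)) := by
          rw [← hlist]
          exact List.mem_map.mpr ⟨α, hαs, rfl⟩
        obtain ⟨α', hα', hα'eq⟩ := List.mem_map.mp this
        exact ⟨α', (Finset.mem_sort _).mp hα', hα'eq⟩
      obtain ⟨α', hα', htreq⟩ := htr
      refine ⟨α', hα', ?_⟩
      rw [hxα]
      ext x'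
      simp only [Set.mem_inter_iff, Set.mem_Ico, and_congr_left_iff]
      intro hx'
      have hx'lt : x' < I (mc F₀) :=
        lt_of_lt_of_le hx'.2 (hI.monotone (Nat.succ_le_of_lt hcase))
      have hrange : x' ∈ Finset.range (I (mc F₀)) := Finset.mem_range.mpr hx'lt
      constructor
      · intro hxt
        have : x' ∈ tr α (mc F₀) := by
          simp only [htrdef, Finset.mem_filter]
          exact ⟨hrange, hxt⟩
        rw [← htreq] at this
        simp only [htrdef, Finset.mem_filter] at this
        exact this.2
      · intro hxt
        have : x' ∈ tr α' (mc F₀) := by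
          simp only [htrdef, Finset.mem_filter]
          exact ⟨hrange, hxt⟩
        rw [htreq] at this
        simp only [htrdef, Finset.mem_filter] at this
        exact this.2
  · intro F hF α hα
    exact Finset.mem_sup.mpr ⟨F, hF, hα⟩
end

section
/- Let T = {t_α : α < ω₁} be a tower, I ∈ [ω]^ω with t_α ∩ I_m ≠ ∅ for all α, m, and suppose X ∈ [ω₁]^{ω₁} and n ≥ 2 are such that for every m < ω, the partial order ({t_α ∩ I_m : α ∈ X}, ⊆) has width at most n. Then there is an infinite set t ⊆ ω with t ⊆* t_α for all α ∈ X (indeed t meets the tower at a cofinal subfamily, filling the tower T). -/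
private lemma countable_Iio_of_lt_omega1 (o : Ordinal.{0}) (h : o < omega1) :
    (Set.Iio o).Countable := by
  rw [Cardinal.countable_iff_lt_aleph_one, Ordinal.mk_Iio_ordinal]
  have h1 : o.card < Cardinal.aleph 1 := Cardinal.lt_ord.mp h
  have := (Cardinal.lift_lt.{0,1}).mpr h1
  simpa [Cardinal.lift_aleph] using this

section Aux

variable (t : Ordinal → Set ℕ) (I : ℕ → ℕ) (X : Set Ordinal)

/-- the traces on the m-th interval -/
def PP (m : ℕ) : Set (Set ℕ) := {s | ∃ α ∈ X, s = t α ∩ Set.Ico (I m) (I (m + 1))}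

/-- minimal traces -/
def Mins (m : ℕ) : Set (Set ℕ) :=
  {s | s ∈ PP t I X m ∧ ∀ s' ∈ PP t I X m, s' ⊆ s → s' = s}

/-- minimal traces below t α -/
def cc (α : Ordinal) (m : ℕ) : Set (Set ℕ) := {s | s ∈ Mins t I X m ∧ s ⊆ t α}

lemma PP_finite {m : ℕ} {s : Set ℕ} (hs : s ∈ PP t I X m) : s.Finite := by
  obtain ⟨α, -, rfl⟩ := hs
  exact (Set.finite_Ico _ _).inter_of_right _

lemma PP_subsets {m : ℕ} {s : Set ℕ} (hs : s ∈ PP t I X m) :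
    s ⊆ Set.Ico (I m) (I (m + 1)) := by
  obtain ⟨α, -, rfl⟩ := hs
  exact Set.inter_subset_right

lemma Mins_finite (m : ℕ) : (Mins t I X m).Finite :=
  ((Set.finite_Ico (I m) (I (m+1))).finite_subsets).subset
    (fun _ hs => PP_subsets t I X hs.1)

lemma cc_finite (α : Ordinal) (m : ℕ) : (cc t I X α m).Finite :=
  (Mins_finite t I X m).subset (fun _ hs => hs.1)

/-- every trace contains a minimal trace -/
lemma exists_min {m : ℕ} {s : Set ℕ} (hs : s ∈ PP t I X m) :
    ∃ s' ∈ Mins t I X m, s' ⊆ s := by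
  have key : ∀ k : ℕ, ∀ s : Set ℕ, s ∈ PP t I X m → s.ncard ≤ k →
      ∃ s' ∈ Mins t I X m, s' ⊆ s := by
    intro k
    induction k with
    | zero =>
      intro s hs hcard
      refine ⟨s, ⟨hs, ?_⟩, subset_rfl⟩
      intro s' hs' hsub
      have : s = ∅ := by
        rw [← Set.ncard_eq_zero (PP_finite t I X hs)]; omega
      subst this
      exact Set.subset_empty_iff.mp hsub
    | succ k ih =>
      intro s hs hcard
      by_cases hmin : ∀ s' ∈ PP t I X m, s' ⊆ s → s' = s
      · exact ⟨s, ⟨hs, hmin⟩, subset_rfl⟩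
      · push_neg at hmin
        obtain ⟨s', hs', hsub, hne⟩ := hmin
        have hlt : s'.ncard < s.ncard :=
          Set.ncard_lt_ncard (ssubset_of_subset_of_ne hsub hne) (PP_finite t I X hs)
        obtain ⟨s'', hs'', hsub''⟩ := ih s' hs' (by omega)
        exact ⟨s'', hs'', hsub''.trans hsub⟩
  exact key s.ncard s hs le_rfl

end Aux

/-- If `T = {t_α}` is a tower, `I ∈ [ω]^ω` with `t_α ∩ I_m ≠ ∅` for all `α, m`, and
`X ⊆ ω₁` is uncountable such that for every `m` the partial order
`({t_α ∩ I_m : α ∈ X}, ⊆)` has width at most `n`, then there is an infinite `u ⊆ ω`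
with `u ⊆* t_α` for every `α ∈ X`. -/
theorem tower_filled_of_small_width
    (n : ℕ) (hn : 2 ≤ n)
    (t : Ordinal → Set ℕ)
    (htinf : ∀ α, α < omega1 → (t α).Infinite)
    (htower : ∀ α β : Ordinal, α < β → β < omega1 → (t β \ t α).Finite)
    (I : ℕ → ℕ) (hI : StrictMono I)
    (hmeet : ∀ α, α < omega1 → ∀ m : ℕ, (t α ∩ Set.Ico (I m) (I (m + 1))).Nonempty)
    (X : Set Ordinal) (hX : X ⊆ Set.Iio omega1) (hXunc : ¬X.Countable)
    (hwidth : ∀ m : ℕ, ∀ S : Finset (Set ℕ),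
      (∀ x ∈ S, ∃ α ∈ X, x = t α ∩ Set.Ico (I m) (I (m + 1))) →
      (∀ x ∈ S, ∀ y ∈ S, x ≠ y → ¬x ⊆ y) →
      S.card ≤ n) :
    ∃ u : Set ℕ, u.Infinite ∧ ∀ α ∈ X, (u \ t α).Finite := by
  classical
  -- X is unbounded in ω₁
  have hXub : ∀ δ : Ordinal, δ < omega1 → ∃ γ ∈ X, δ < γ := by
    intro δ hδ
    by_contra hctr
    push_neg at hctr
    apply hXunc
    have hsub : X ⊆ Set.Iio (δ + 1) := fun γ hγ => Order.lt_succ_iff.mpr (hctr γ hγ)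
    have hδ1 : δ + 1 < omega1 :=
      (Cardinal.isSuccLimit_ord (by simp [Cardinal.aleph0_le_aleph])).succ_lt hδ
    exact (countable_Iio_of_lt_omega1 _ hδ1).mono hsub
  -- nonemptiness of minimal sets
  have hMne : ∀ m : ℕ, ∀ s ∈ Mins t I X m, s.Nonempty := by
    rintro m s ⟨⟨α, hα, rfl⟩, -⟩
    exact hmeet α (hX hα) m
  -- each cc α m is nonempty
  have hccne : ∀ α ∈ X, ∀ m : ℕ, (cc t I X α m).Nonempty := by
    intro α hα m
    obtain ⟨s', hs', hsub⟩ := exists_min t I X (s := t α ∩ Set.Ico (I m) (I (m+1)))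
      ⟨α, hα, rfl⟩
    exact ⟨s', hs', hsub.trans Set.inter_subset_left⟩
  -- width bound on Mins, hence on cc
  have hMcard : ∀ m : ℕ, (Mins t I X m).ncard ≤ n := by
    intro m
    have hfin := Mins_finite t I X m
    have := hwidth m hfin.toFinset
      (by
        intro x hx
        rw [Set.Finite.mem_toFinset] at hx
        exact hx.1)
      (by
        intro x hx y hy hne hsub
        rw [Set.Finite.mem_toFinset] at hx hy
        exact hne (hy.2 x hx.1 hsub))
    rwa [Set.ncard_eq_toFinset_card _ hfin]
  have hcccard : ∀ α m, (cc t I X α m).ncard ≤ n := fun α m =>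
    le_trans (Set.ncard_le_ncard (fun s hs => hs.1) (Mins_finite t I X m)) (hMcard m)
  -- the minimal liminf value j
  set S : Set ℕ := {j | ∃ α ∈ X, Set.Infinite {m | (cc t I X α m).ncard ≤ j}} with hS
  have hSne : S.Nonempty := by
    have h0 : (0 : Ordinal) < omega1 := by
      rw [omega1, Cardinal.lt_ord]
      simpa using Cardinal.aleph_pos 1
    obtain ⟨α, hα, -⟩ := hXub 0 h0
    refine ⟨n, α, hα, ?_⟩
    have : {m | (cc t I X α m).ncard ≤ n} = Set.univ :=
      Set.eq_univ_of_forall (fun m => hcccard α m)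
    rw [this]; exact Set.infinite_univ
  set j : ℕ := sInf S with hj
  obtain ⟨α₀, hα₀X, hA₀⟩ : j ∈ S := Nat.sInf_mem hSne
  set A₀ : Set ℕ := {m | (cc t I X α₀ m).ncard ≤ j} with hA₀def
  have hjpos : 1 ≤ j := by
    by_contra h
    have hj0 : j = 0 := by omega
    obtain ⟨m, hm⟩ := hA₀.nonempty
    have h1 : (cc t I X α₀ m).Nonempty := hccne α₀ hα₀X m
    have := Set.ncard_pos (cc_finite t I X α₀ m) |>.mpr h1
    have hm' : (cc t I X α₀ m).ncard ≤ j := hm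
    omega
  have hminS : ∀ β ∈ X, {m | (cc t I X β m).ncard ≤ j - 1}.Finite := by
    intro β hβ
    by_contra h
    have : j - 1 ∈ S := ⟨β, hβ, h⟩
    have := Nat.sInf_le this
    omega
  -- tower: eventual inclusion of cc's
  have hccsub : ∀ β, α₀ < β → β < omega1 → ∃ m₂ : ℕ, ∀ m, m₂ ≤ m →
      cc t I X β m ⊆ cc t I X α₀ m := by
    intro β hβ hβ1
    have hfd : (t β \ t α₀).Finite := htower α₀ β hβ hβ1
    obtain ⟨N, hN⟩ := hfd.bddAbove
    refine ⟨N + 1, fun m hm s hs => ⟨hs.1, fun x hx => ?_⟩⟩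
    by_contra hxt
    have hxtβ : x ∈ t β := hs.2 hx
    have hxd : x ∈ t β \ t α₀ := ⟨hxtβ, hxt⟩
    have hxN : x ≤ N := hN hxd
    have hxI : I m ≤ x := (PP_subsets t I X hs.1.1 hx).1
    have : m ≤ I m := hI.le_apply
    omega
  -- choose minimal sets
  have hsel : ∀ m : ℕ, ∃ s : Set ℕ, s ∈ cc t I X α₀ m := fun m => hccne α₀ hα₀X m
  choose sm hsm using hsel
  refine ⟨⋃ m ∈ A₀, sm m, ?_, ?_⟩
  · -- infinite
    intro hfin
    obtain ⟨N, hN⟩ := hfin.bddAbove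
    obtain ⟨m, hmA, hm⟩ := hA₀.exists_gt N
    obtain ⟨x, hx⟩ := hMne m (sm m) (hsm m).1
    have hxu : x ∈ ⋃ m ∈ A₀, sm m := Set.mem_biUnion hmA hx
    have hxle : x ≤ N := hN hxu
    have hxI : I m ≤ x := (PP_subsets t I X (hsm m).1.1 hx).1
    have : m ≤ I m := hI.le_apply
    omega
  · -- almost contained in each t β
    have main : ∀ β ∈ X, α₀ < β → ((⋃ m ∈ A₀, sm m) \ t β).Finite := by
      intro β hβX hβ
      obtain ⟨m₂, hm₂⟩ := hccsub β hβ (hX hβX)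
      obtain ⟨m₃, hm₃⟩ := (hminS β hβX).bddAbove
      set M := max m₂ (m₃ + 1) with hM
      have hsubM : (⋃ m ∈ A₀, sm m) \ t β ⊆ ⋃ m ∈ A₀ ∩ Set.Iio M, sm m := by
        rintro x ⟨hxu, hxt⟩
        simp only [Set.mem_iUnion] at hxu
        obtain ⟨m, hmA, hxm⟩ := hxu
        by_cases hmM : m < M
        · simp only [Set.mem_iUnion]
          exact ⟨m, ⟨hmA, hmM⟩, hxm⟩
        · exfalso
          push_neg at hmM
          -- cc β m = cc α₀ m
          have hsub : cc t I X β m ⊆ cc t I X α₀ m :=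
            hm₂ m (le_trans (le_max_left _ _) hmM)
          have hjm : j ≤ (cc t I X β m).ncard := by
            by_contra hlt
            push_neg at hlt
            have : m ∈ {m | (cc t I X β m).ncard ≤ j - 1} := by
              simp only [Set.mem_setOf_eq]; omega
            have := hm₃ this
            have : m₃ + 1 ≤ M := le_max_right _ _
            omega
          have heq : cc t I X β m = cc t I X α₀ m :=
            Set.eq_of_subset_of_ncard_le hsub
              (le_trans hmA hjm) (cc_finite t I X α₀ m)
          have : sm m ∈ cc t I X β m := heq ▸ hsm m
          exact hxt (this.2 hxm)
      refine (Set.Finite.biUnion ((Set.finite_Iio M).inter_of_right A₀) ?_).subset hsubM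
      intro m _
      exact PP_finite t I X (hsm m).1.1
    intro β hβX
    obtain ⟨γ, hγX, hγ⟩ := hXub (max β α₀)
      (max_lt (hX hβX) (hX hα₀X))
    have h1 : ((⋃ m ∈ A₀, sm m) \ t γ).Finite :=
      main γ hγX (lt_of_le_of_lt (le_max_right _ _) hγ)
    have h2 : (t γ \ t β).Finite :=
      htower β γ (lt_of_le_of_lt (le_max_left _ _) hγ) (hX hγX)
    refine (h1.union h2).subset ?_
    rintro x ⟨hxu, hxt⟩
    by_cases hxγ : x ∈ t γ
    · exact Or.inr ⟨hxγ, hxt⟩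
    · exact Or.inl ⟨hxu, hxγ⟩
end

section
/- Assume φ₁(𝒞,𝒯,𝐄). For every chain {(a_n, 𝒜ⁿ) : n < ω} in (𝒞, ≺) (a strictly ⪯-increasing ω-sequence), the intersection ⋂_{n<ω} (⋃𝒜ⁿ) is empty. -/
/-- An element of the damage control collection `𝒞`: a pair `(a, 𝒜)` where `a` is a finite
root and `𝒜 ⊆ [ω₁]^N` is a family, represented by functions `ℕ → Ordinal` normalized to `0`
beyond the first `N` coordinates. -/
structure DCE : Type 1 where
  root : Finset Ordinal.{0}
  N : ℕ
  fam : Set (ℕ → Ordinal.{0})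

namespace DCE

/-- The `i`-th column `𝒜_i = {c(i) : c ∈ 𝒜}`. -/
def col (E : DCE) (i : ℕ) : Set Ordinal.{0} := (fun c => c i) '' E.fam

/-- `⋃𝒜`, the set of all entries of members of the family. -/
def unionSet (E : DCE) : Set Ordinal.{0} := {x | ∃ c ∈ E.fam, ∃ i, i < E.N ∧ c i = x}

/-- Validity (condition (C1)): `𝒜 ⊆ [ω₁]^N` is an uncountable non-overlapping family of
increasing `N`-tuples, normalized, and the root lies below all of `⋃𝒜`. -/
def Valid (E : DCE) : Prop :=
  1 ≤ E.N ∧ ¬E.fam.Countable ∧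
  (∀ c ∈ E.fam, ∀ i j : ℕ, i < j → j < E.N → c i < c j) ∧
  (∀ c ∈ E.fam, ∀ i : ℕ, E.N ≤ i → c i = 0) ∧
  (∀ c ∈ E.fam, ∀ i : ℕ, i < E.N → c i < omega1) ∧
  (∀ c ∈ E.fam, ∀ d ∈ E.fam, c ≠ d →
    (∀ i, i < E.N → ∀ j, j < E.N → c i < d j) ∨
    (∀ i, i < E.N → ∀ j, j < E.N → d i < c j)) ∧
  (∀ x ∈ E.root, x < omega1) ∧
  (∀ x ∈ E.root, ∀ c ∈ E.fam, ∀ i, i < E.N → x < c i)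

/-- `c[I]`, the restriction of `c : ℕ → Ordinal` along the index map `I`, normalized. -/
def reindex (NA : ℕ) (I : ℕ → ℕ) (c : ℕ → Ordinal.{0}) : ℕ → Ordinal.{0} :=
  fun j => if j < NA then c (I j) else 0

/-- The copy structure of `𝒜 ⪯ ℬ`: a (nonempty) finite set `𝕀` of strictly increasing index
maps `[N_𝒜] → [N_ℬ]` with `c[I] ∈ 𝒜` for every `c ∈ ℬ`, `I ∈ 𝕀`, and with all coordinates of
members of `ℬ` outside `⋃_{I ∈ 𝕀} ran I` avoiding `⋃𝒜`. -/
def Copies (E F : DCE) (𝕀 : Finset (ℕ → ℕ)) : Prop :=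
  𝕀.Nonempty ∧
  (∀ I ∈ 𝕀, (∀ i j : ℕ, i < j → j < E.N → I i < I j) ∧ ∀ i, i < E.N → I i < F.N) ∧
  (∀ c ∈ F.fam, ∀ I ∈ 𝕀, reindex E.N I c ∈ E.fam) ∧
  (∀ c ∈ F.fam, ∀ j, j < F.N → (∀ I ∈ 𝕀, ∀ i, i < E.N → I i ≠ j) → c j ∉ E.unionSet)

/-- The exact copy structure required in (C2): moreover `[c]^{N_𝒜} ∩ 𝒜 = {c[I] : I ∈ 𝕀}`. -/
def Exact (E F : DCE) (𝕀 : Finset (ℕ → ℕ)) : Prop :=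
  Copies E F 𝕀 ∧
  ∀ c ∈ F.fam, ∀ d ∈ E.fam, (∀ i, i < E.N → ∃ j, j < F.N ∧ d i = c j) →
    ∃ I ∈ 𝕀, d = reindex E.N I c

/-- `(a,𝒜) ⪯ (b,ℬ)`. -/
def le (E F : DCE) : Prop := E.root ⊆ F.root ∧ ∃ 𝕀 : Finset (ℕ → ℕ), Copies E F 𝕀

/-- `(a,𝒜) ≺ (b,ℬ)`. -/
def lt (E F : DCE) : Prop := le E F ∧ E ≠ F

/-- The trivial element `(∅, [ω₁]¹)`. -/
def trivialDCE : DCE where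
  root := ∅
  N := 1
  fam := {c | ∃ α : Ordinal.{0}, α < omega1 ∧ c = fun j => if j = 0 then α else 0}

/-- The tree `𝒯` of all columns of members of `𝒞`. -/
def Tset (𝒞 : Set DCE) : Set (Set Ordinal.{0}) :=
  {X | ∃ E ∈ 𝒞, ∃ i, i < E.N ∧ X = E.col i}

/-- The damage control axioms `φ₁(𝒞,𝒯,𝐄)` (with `𝒯` and `𝐄` induced from `𝒞`):
(C1) the trivial element belongs to `𝒞` and every member is valid; (C2) column containment
implies the exact copy structure; (T1) every node of `𝒯` has only finitely many strict
supersets in `𝒯`; (T3) `⊆`-incomparable members of `𝒯` have countable intersection;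
(T4) for `Y ⊊ X` in `𝒯`, the increasing enumerations satisfy `X(α) < Y(α)` for all `α < ω₁`. -/
def phi1 (𝒞 : Set DCE) : Prop :=
  trivialDCE ∈ 𝒞 ∧
  (∀ E ∈ 𝒞, E.Valid) ∧
  (∀ E ∈ 𝒞, ∀ F ∈ 𝒞, (∃ i, i < F.N ∧ ∃ j, j < E.N ∧ F.col i ⊆ E.col j) →
    E.root ⊆ F.root ∧ ∃ 𝕀 : Finset (ℕ → ℕ), Exact E F 𝕀) ∧
  (∀ X ∈ Tset 𝒞, {Y ∈ Tset 𝒞 | X ⊂ Y}.Finite) ∧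
  (∀ X ∈ Tset 𝒞, ∀ Y ∈ Tset 𝒞, ¬X ⊆ Y → ¬Y ⊆ X → (X ∩ Y).Countable) ∧
  (∀ X ∈ Tset 𝒞, ∀ Y ∈ Tset 𝒞, Y ⊆ X → Y ≠ X → ∀ α, α < omega1 →
    Ordinal.enumOrd X α < Ordinal.enumOrd Y α)

end DCE

/-!
A point `ξ` of the intersection lies in a column of every `𝒜ⁿ`. By the copy structure of
`𝒜ⁿ ⪯ 𝒜ⁿ⁺¹`, a column of `𝒜ⁿ⁺¹` containing `ξ` lies inside a column of `𝒜ⁿ` containing `ξ`, and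
properly so: by (C2) equal columns would give `𝒜ⁿ⁺¹ ⪯ 𝒜ⁿ`, and `⪯` is antisymmetric on valid
elements. By (T4) the position of `ξ` in the smaller column is strictly smaller, so the largest
position of `ξ` in a column of `𝒜ⁿ` is a strictly decreasing sequence of ordinals.
-/

open Set

namespace Ordinal

variable {s : Set Ordinal.{0}} {a o ξ : Ordinal.{0}}

theorem enumOrd_mem_and_forall_lt (ha : a ∈ s) (H : ∀ b < o, enumOrd s b < a) :
    enumOrd s o ∈ s ∧ ∀ b < o, enumOrd s b < enumOrd s o := by
  rw [enumOrd]
  exact csInf_mem (s := s ∩ {b | ∀ c < o, enumOrd s c < b}) ⟨a, ha, H⟩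

theorem not_bddAbove_union_Ioi (s : Set Ordinal.{0}) (ξ : Ordinal.{0}) :
    ¬BddAbove (s ∪ Ioi ξ) :=
  fun h ↦ not_bddAbove_Ioi (a := ξ) (h.mono subset_union_right)

theorem enumOrd_eq_enumOrd_union_Ioi (h : enumOrd (s ∪ Ioi ξ) o ≤ ξ) :
    enumOrd s o = enumOrd (s ∪ Ioi ξ) o := by
  induction o using WellFoundedLT.induction with
  | _ o IH =>
    have ht := not_bddAbove_union_Ioi s ξ
    have hagree : ∀ b < o, enumOrd s b = enumOrd (s ∪ Ioi ξ) b := fun b hb ↦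
      IH b hb ((enumOrd_strictMono ht hb).le.trans h)
    have hmem : enumOrd (s ∪ Ioi ξ) o ∈ s :=
      (enumOrd_mem ht o).resolve_right h.not_gt
    have hlt : ∀ b < o, enumOrd s b < enumOrd (s ∪ Ioi ξ) o := fun b hb ↦
      (hagree b hb).trans_lt (enumOrd_strictMono ht hb)
    obtain ⟨hmem_s, hlt_s⟩ := enumOrd_mem_and_forall_lt hmem hlt
    refine (enumOrd_le_of_forall_lt hmem hlt).antisymm
      (enumOrd_le_of_forall_lt (Or.inl hmem_s) fun b hb ↦ ?_)
    exact hagree b hb ▸ hlt_s b hb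

/-- The position of `ξ ∈ s` in the increasing enumeration of `s`. It is read off the enumeration of
`s ∪ Ioi ξ`, which agrees with that of `s` up to `ξ` and, being unbounded, has the API of
`enumOrd`. -/
noncomputable def enumOrdPos (s : Set Ordinal.{0}) (ξ : Ordinal.{0}) : Ordinal.{0} :=
  sInf {o | enumOrd (s ∪ Ioi ξ) o = ξ}

theorem enumOrd_union_Ioi_enumOrdPos (hξ : ξ ∈ s) : enumOrd (s ∪ Ioi ξ) (enumOrdPos s ξ) = ξ :=
  csInf_mem (enumOrd_surjective (not_bddAbove_union_Ioi s ξ) (Or.inl hξ))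

theorem enumOrdPos_le (hξ : ξ ∈ s) : enumOrdPos s ξ ≤ ξ :=
  (le_enumOrd_self (not_bddAbove_union_Ioi s ξ)).trans (enumOrd_union_Ioi_enumOrdPos hξ).le

theorem enumOrd_enumOrdPos (hξ : ξ ∈ s) : enumOrd s (enumOrdPos s ξ) = ξ := by
  rw [enumOrd_eq_enumOrd_union_Ioi (enumOrd_union_Ioi_enumOrdPos hξ).le,
    enumOrd_union_Ioi_enumOrdPos hξ]

theorem enumOrdPos_lt_enumOrdPos {X Y : Set Ordinal.{0}} (hξ : ξ ∈ Y) (hYX : Y ⊆ X)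
    (hlt : enumOrd X (enumOrdPos Y ξ) < ξ) : enumOrdPos Y ξ < enumOrdPos X ξ := by
  have hle : enumOrd (X ∪ Ioi ξ) (enumOrdPos Y ξ) ≤ ξ :=
    (enumOrd_le_of_subset (not_bddAbove_union_Ioi Y ξ) (union_subset_union_left _ hYX) _).trans
      (enumOrd_union_Ioi_enumOrdPos hξ).le
  rw [enumOrd_eq_enumOrd_union_Ioi hle] at hlt
  rwa [← enumOrd_lt_enumOrd (not_bddAbove_union_Ioi X ξ),
    enumOrd_union_Ioi_enumOrdPos (hYX hξ)]

end Ordinal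

theorem Nat.apply_add_sub_le_apply {I : ℕ → ℕ} {N : ℕ} (hI : ∀ i j, i < j → j < N → I i < I j)
    {i j : ℕ} (hij : i ≤ j) (hj : j < N) : I i + (j - i) ≤ I j := by
  induction j, hij using Nat.le_induction with
  | base => simp
  | succ j hij IH =>
    have := hI j (j + 1) j.lt_succ_self hj
    have := IH (by omega)
    omega

namespace DCE

open Ordinal

variable {𝒞 : Set DCE} {E F : DCE} {𝕀 : Finset (ℕ → ℕ)} {ξ : Ordinal.{0}}

theorem ext (hroot : E.root = F.root) (hN : E.N = F.N) (hfam : E.fam = F.fam) :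
    E = F := by
  cases E; cases F; cases hroot; cases hN; cases hfam; rfl

theorem mem_unionSet_iff : ξ ∈ E.unionSet ↔ ∃ j < E.N, ξ ∈ E.col j := by
  constructor
  · rintro ⟨c, hc, j, hj, rfl⟩
    exact ⟨j, hj, c, hc, rfl⟩
  · rintro ⟨j, hj, c, hc, rfl⟩
    exact ⟨c, hc, j, hj, rfl⟩

theorem Copies.N_le (h : Copies E F 𝕀) : E.N ≤ F.N := by
  obtain ⟨I, hI⟩ := h.1
  obtain ⟨hmono, hbound⟩ := h.2.1 I hI
  rcases Nat.eq_zero_or_pos E.N with hN | hN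
  · omega
  · have := Nat.apply_add_sub_le_apply hmono (Nat.zero_le (E.N - 1)) (by omega)
    have := hbound (E.N - 1) (by omega)
    omega

theorem Copies.fam_subset (h : Copies E F 𝕀) (hN : E.N = F.N) (hF : F.Valid) :
    F.fam ⊆ E.fam := by
  intro c hc
  obtain ⟨I, hI⟩ := h.1
  obtain ⟨hmono, hbound⟩ := h.2.1 I hI
  have hid : ∀ i < E.N, I i = i := fun i hi ↦ by
    have := Nat.apply_add_sub_le_apply hmono (i := i) (j := E.N - 1) (by omega) (by omega)
    have := Nat.apply_add_sub_le_apply hmono (Nat.zero_le i) hi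
    have := hbound (E.N - 1) (by omega)
    omega
  convert h.2.2.1 c hc I hI using 1
  funext j
  by_cases hj : j < E.N
  · simp only [reindex, if_pos hj, hid j hj]
  · simp only [reindex, if_neg hj]
    exact hF.2.2.2.1 c hc j (by omega)

theorem le_antisymm (hE : E.Valid) (hF : F.Valid) (hEF : le E F) (hFE : le F E) : E = F := by
  obtain ⟨hroot, 𝕀, h𝕀⟩ := hEF
  obtain ⟨hroot', 𝕁, h𝕁⟩ := hFE
  have hN : E.N = F.N := h𝕀.N_le.antisymm h𝕁.N_le
  exact ext (hroot.antisymm hroot') hN ((h𝕁.fam_subset hN.symm hE).antisymm (h𝕀.fam_subset hN hF))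

theorem Copies.col_subset (h : Copies E F 𝕀) {I : ℕ → ℕ} (hI : I ∈ 𝕀) {i : ℕ} (hi : i < E.N) :
    F.col (I i) ⊆ E.col i := by
  rintro _ ⟨c, hc, rfl⟩
  exact ⟨reindex E.N I c, h.2.2.1 c hc I hI, if_pos hi⟩

theorem Copies.exists_col_supset (h : Copies E F 𝕀) (hξ : ξ ∈ E.unionSet)
    {j : ℕ} (hj : j < F.N) (hξj : ξ ∈ F.col j) : ∃ i < E.N, F.col j ⊆ E.col i := by
  obtain ⟨c, hc, rfl⟩ := hξj
  by_contra! hnot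
  refine h.2.2.2 c hc j hj (fun I hI i hi hIi ↦ ?_) hξ
  exact hnot i hi (hIi ▸ h.col_subset hI hi)

open Classical in
/-- The largest position of `ξ` in a column of `E` (and `0` if `ξ ∉ ⋃E`). -/
noncomputable def maxColPos (E : DCE) (ξ : Ordinal.{0}) : Ordinal.{0} :=
  ((Finset.range E.N).filter (ξ ∈ E.col ·)).sup fun j ↦ enumOrdPos (E.col j) ξ

theorem le_maxColPos {i : ℕ} (hi : i < E.N) (hξ : ξ ∈ E.col i) :
    enumOrdPos (E.col i) ξ ≤ maxColPos E ξ := by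
  classical
  exact Finset.le_sup (f := fun j ↦ enumOrdPos (E.col j) ξ)
    (Finset.mem_filter.2 ⟨Finset.mem_range.2 hi, hξ⟩)

theorem exists_maxColPos_eq (hξ : ξ ∈ E.unionSet) :
    ∃ j < E.N, ξ ∈ E.col j ∧ maxColPos E ξ = enumOrdPos (E.col j) ξ := by
  classical
  obtain ⟨j₀, hj₀, hξj₀⟩ := mem_unionSet_iff.1 hξ
  obtain ⟨j, hj, hmax⟩ := Finset.exists_mem_eq_sup ((Finset.range E.N).filter (ξ ∈ E.col ·))
    ⟨j₀, Finset.mem_filter.2 ⟨Finset.mem_range.2 hj₀, hξj₀⟩⟩ fun j ↦ enumOrdPos (E.col j) ξ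
  obtain ⟨hj, hξj⟩ := Finset.mem_filter.1 hj
  exact ⟨j, Finset.mem_range.1 hj, hξj, hmax⟩

theorem phi1.col_ne_col (h : phi1 𝒞) (hE : E ∈ 𝒞) (hF : F ∈ 𝒞) (hlt : lt E F) {i j : ℕ}
    (hi : i < E.N) (hj : j < F.N) : F.col j ≠ E.col i := by
  intro heq
  obtain ⟨hroot, 𝕁, h𝕁, -⟩ := h.2.2.1 F hF E hE ⟨i, hi, j, hj, heq.symm.subset⟩
  exact hlt.2 (le_antisymm (h.2.1 E hE) (h.2.1 F hF) hlt.1 ⟨hroot, 𝕁, h𝕁⟩)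

theorem phi1.enumOrdPos_lt (h : phi1 𝒞) (hE : E ∈ 𝒞) (hF : F ∈ 𝒞) (hlt : lt E F) {i j : ℕ}
    (hi : i < E.N) (hj : j < F.N) (hξ : ξ ∈ F.col j) (hsub : F.col j ⊆ E.col i) :
    enumOrdPos (F.col j) ξ < enumOrdPos (E.col i) ξ := by
  have hξω : ξ < omega1 := by
    obtain ⟨c, hc, rfl⟩ := hξ
    exact (h.2.1 F hF).2.2.2.2.1 c hc j hj
  refine enumOrdPos_lt_enumOrdPos hξ hsub ?_
  have hT4 := h.2.2.2.2.2 _ ⟨E, hE, i, hi, rfl⟩ _ ⟨F, hF, j, hj, rfl⟩ hsub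
    (h.col_ne_col hE hF hlt hi hj) _ ((enumOrdPos_le hξ).trans_lt hξω)
  rwa [enumOrd_enumOrdPos hξ] at hT4

theorem phi1.maxColPos_lt (h : phi1 𝒞) (hE : E ∈ 𝒞) (hF : F ∈ 𝒞) (hlt : lt E F)
    (hξE : ξ ∈ E.unionSet) (hξF : ξ ∈ F.unionSet) : maxColPos F ξ < maxColPos E ξ := by
  obtain ⟨j, hj, hξj, hmax⟩ := exists_maxColPos_eq hξF
  obtain ⟨-, 𝕀, h𝕀⟩ := hlt.1
  obtain ⟨i, hi, hsub⟩ := h𝕀.exists_col_supset hξE hj hξj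
  calc maxColPos F ξ = enumOrdPos (F.col j) ξ := hmax
    _ < enumOrdPos (E.col i) ξ := h.enumOrdPos_lt hE hF hlt hi hj hξj hsub
    _ ≤ maxColPos E ξ := le_maxColPos hi (hsub hξj)

end DCE

/-- Lemma 7.f: under `φ₁(𝒞,𝒯,𝐄)`, for every strictly `⪯`-increasing `ω`-chain
`{(a_n,𝒜ⁿ) : n < ω}` in `(𝒞,≺)`, the intersection `⋂_{n<ω} ⋃𝒜ⁿ` is empty. -/
theorem dce_chain_inter_empty (𝒞 : Set DCE) (h : DCE.phi1 𝒞)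
    (E : ℕ → DCE) (hE : ∀ k, E k ∈ 𝒞)
    (hchain : ∀ k, DCE.lt (E k) (E (k + 1))) :
    (⋂ k, (E k).unionSet) = ∅ := by
  refine Set.eq_empty_of_forall_notMem fun ξ hξ ↦ ?_
  have hmem := Set.mem_iInter.1 hξ
  obtain ⟨n, hn⟩ := WellFounded.not_rel_apply_succ (r := (· < ·)) fun k ↦ (E k).maxColPos ξ
  exact hn (h.maxColPos_lt (hE n) (hE (n + 1)) (hchain n) (hmem n) (hmem (n + 1)))
end

section
/- Assume φ₁(𝒞,𝒯,𝐄). For every uncountable X ⊆ ω₁, the collection 𝒞(X) = {(a,𝒜) ∈ 𝒞 : X ⊆ 𝒜_i for some column i < N_𝒜}, ordered by ≺, is a well-order; moreover 𝒞(X) is finite. -/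
namespace DCEAux

open Ordinal Set

lemma ctbl_Iio {β : Ordinal.{0}} (hβ : β < omega1) : (Set.Iio β).Countable := by
  have h1 : β.card < Cardinal.aleph 1 := Cardinal.lt_ord.mp hβ
  have h2 : β.card ≤ Cardinal.aleph0 := by
    rwa [← Cardinal.succ_aleph0, Order.lt_succ_iff] at h1
  rw [← Cardinal.le_aleph0_iff_set_countable, Ordinal.mk_Iio_ordinal,
    ← Cardinal.lift_aleph0.{1, 0}]
  exact Cardinal.lift_le.mpr h2

lemma ctbl_Iic {β : Ordinal.{0}} (hβ : β < omega1) : (Set.Iic β).Countable := by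
  have hsucc : Order.succ β < omega1 :=
    (Cardinal.isSuccLimit_ord (Cardinal.aleph0_le_aleph 1)).succ_lt hβ
  exact (ctbl_Iio hsucc).mono (Set.Iic_subset_Iio.mpr (Order.lt_succ β))

lemma enumOrd_good (W : Set Ordinal.{0}) (hWc : ¬ W.Countable) (hWb : W ⊆ Set.Iio omega1) :
    ∀ α, α < omega1 → Ordinal.enumOrd W α ∈ W ∧
      ∀ β, β < α → Ordinal.enumOrd W β < Ordinal.enumOrd W α := by
  intro α
  induction α using Ordinal.induction with
  | h α IH =>
    intro hα
    have hne : (W ∩ { b | ∀ c, c < α → Ordinal.enumOrd W c < b }).Nonempty := by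
      have hU : (⋃ c ∈ Set.Iio α, Set.Iic (Ordinal.enumOrd W c)).Countable := by
        refine Set.Countable.biUnion (ctbl_Iio hα) ?_
        intro c hc
        exact ctbl_Iic (hWb ((IH c hc (hc.trans hα)).1))
      obtain ⟨w, hwW, hwU⟩ : (W \ ⋃ c ∈ Set.Iio α, Set.Iic (Ordinal.enumOrd W c)).Nonempty := by
        rw [Set.nonempty_iff_ne_empty]
        intro hemp
        rw [Set.diff_eq_empty] at hemp
        exact hWc (hU.mono hemp)
      refine ⟨w, hwW, fun c hc => ?_⟩
      by_contra hle
      push_neg at hle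
      exact hwU (Set.mem_biUnion hc hle)
    have hmem : Ordinal.enumOrd W α ∈ W ∩ { b | ∀ c, c < α → Ordinal.enumOrd W c < b } := by
      rw [Ordinal.enumOrd]
      exact csInf_mem hne
    exact ⟨hmem.1, fun β hβ => hmem.2 β hβ⟩

lemma le_enumOrd (W : Set Ordinal.{0}) (hWc : ¬ W.Countable) (hWb : W ⊆ Set.Iio omega1) :
    ∀ α, α < omega1 → α ≤ Ordinal.enumOrd W α := by
  intro α
  induction α using Ordinal.induction with
  | h α IH =>
    intro hα
    by_contra hlt
    push_neg at hlt
    have h1 := (enumOrd_good W hWc hWb α hα).2 _ hlt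
    have h2 := IH _ hlt (hlt.trans hα)
    exact absurd (h2.trans_lt h1) (lt_irrefl _)

lemma enumOrd_surj_lt (W : Set Ordinal.{0}) (hWc : ¬ W.Countable) (hWb : W ⊆ Set.Iio omega1)
    {x : Ordinal} (hx : x ∈ W) : ∃ β, β < omega1 ∧ Ordinal.enumOrd W β = x := by
  have hxlt : x < omega1 := hWb hx
  have hxt : x ∈ { b : Ordinal | x ≤ Ordinal.enumOrd W b } := le_enumOrd W hWc hWb x hxlt
  have htne : { b : Ordinal | x ≤ Ordinal.enumOrd W b }.Nonempty := ⟨x, hxt⟩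
  refine ⟨sInf { b : Ordinal | x ≤ Ordinal.enumOrd W b }, lt_of_le_of_lt (csInf_le' hxt) hxlt, ?_⟩
  have hβ : sInf { b : Ordinal | x ≤ Ordinal.enumOrd W b } ∈
      { b : Ordinal | x ≤ Ordinal.enumOrd W b } := csInf_mem htne
  refine le_antisymm ?_ hβ
  apply Ordinal.enumOrd_le_of_forall_lt hx
  intro c hc
  by_contra hle
  push_neg at hle
  have hmem : c ∈ { b : Ordinal | x ≤ Ordinal.enumOrd W b } := hle
  exact (csInf_le' hmem).not_gt hc

lemma mono_shift (I : ℕ → ℕ) (N : ℕ) (hm : ∀ i j : ℕ, i < j → j < N → I i < I j) :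
    ∀ k i, i + k < N → I i + k ≤ I (i + k) := by
  intro k
  induction k with
  | zero => intro i _; simp
  | succ k ih =>
    intro i hik
    have h1 : I i + k ≤ I (i + k) := ih i (by omega)
    have h2 : I (i + k) < I (i + k + 1) := hm (i + k) (i + k + 1) (by omega) (by omega)
    have h3 : i + (k + 1) = i + k + 1 := rfl
    rw [h3]
    omega

lemma index_card (I : ℕ → ℕ) (N M : ℕ) (hN : 1 ≤ N)
    (hm : ∀ i j : ℕ, i < j → j < N → I i < I j) (hb : ∀ i, i < N → I i < M) : N ≤ M := by
  have h1 : I 0 + (N - 1) ≤ I (0 + (N - 1)) := mono_shift I N hm (N - 1) 0 (by omega)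
  have h2 : I (0 + (N - 1)) < M := hb _ (by omega)
  omega

lemma index_eq (I : ℕ → ℕ) (N : ℕ) (hN : 1 ≤ N)
    (hm : ∀ i j : ℕ, i < j → j < N → I i < I j) (hb : ∀ i, i < N → I i < N) :
    ∀ i, i < N → I i = i := by
  intro i hi
  have h1 : I 0 + i ≤ I (0 + i) := mono_shift I N hm i 0 (by omega)
  have h1' : 0 + i = i := by omega
  rw [h1'] at h1
  have h2 : I i + (N - 1 - i) ≤ I (i + (N - 1 - i)) := mono_shift I N hm (N - 1 - i) i (by omega)
  have h3 : i + (N - 1 - i) = N - 1 := by omega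
  rw [h3] at h2
  have h4 : I (N - 1) < N := hb (N - 1) (by omega)
  omega

lemma le_antisym (𝒞 : Set DCE) (h : DCE.phi1 𝒞) {E F : DCE} (hE : E ∈ 𝒞) (hF : F ∈ 𝒞)
    (h1 : DCE.le E F) (h2 : DCE.le F E) : E = F := by
  obtain ⟨hr1, 𝕀1, h𝕀1⟩ := h1
  obtain ⟨hr2, 𝕀2, h𝕀2⟩ := h2
  have hEv := h.2.1 E hE
  have hFv := h.2.1 F hF
  obtain ⟨I1, hI1⟩ := h𝕀1.1
  obtain ⟨I2, hI2⟩ := h𝕀2.1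
  have hNEF : E.N ≤ F.N :=
    index_card I1 E.N F.N hEv.1 (h𝕀1.2.1 I1 hI1).1 (h𝕀1.2.1 I1 hI1).2
  have hNFE : F.N ≤ E.N :=
    index_card I2 F.N E.N hFv.1 (h𝕀2.2.1 I2 hI2).1 (h𝕀2.2.1 I2 hI2).2
  have hN : E.N = F.N := le_antisymm hNEF hNFE
  have hsub1 : F.fam ⊆ E.fam := by
    intro c hc
    have hre := h𝕀1.2.2.1 c hc I1 hI1
    have hid : DCE.reindex E.N I1 c = c := by
      funext j
      unfold DCE.reindex
      by_cases hj : j < E.N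
      · have hbb : ∀ i, i < E.N → I1 i < E.N := by
          intro i hi
          rw [hN]
          exact (h𝕀1.2.1 I1 hI1).2 i hi
        rw [if_pos hj, index_eq I1 E.N hEv.1 (h𝕀1.2.1 I1 hI1).1 hbb j hj]
      · rw [if_neg hj]
        exact (hFv.2.2.2.1 c hc j (by omega)).symm
    rwa [hid] at hre
  have hsub2 : E.fam ⊆ F.fam := by
    intro c hc
    have hre := h𝕀2.2.2.1 c hc I2 hI2
    have hid : DCE.reindex F.N I2 c = c := by
      funext j
      unfold DCE.reindex
      by_cases hj : j < F.N
      · have hbb : ∀ i, i < F.N → I2 i < F.N := by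
          intro i hi
          rw [← hN]
          exact (h𝕀2.2.1 I2 hI2).2 i hi
        rw [if_pos hj, index_eq I2 F.N hFv.1 (h𝕀2.2.1 I2 hI2).1 hbb j hj]
      · rw [if_neg hj]
        exact (hEv.2.2.2.1 c hc j (by omega)).symm
    rwa [hid] at hre
  have hfam : E.fam = F.fam := Set.Subset.antisymm hsub2 hsub1
  have hroot : E.root = F.root := Finset.Subset.antisymm hr1 hr2
  cases E
  cases F
  simp only [DCE.mk.injEq]
  exact ⟨hroot, hN, hfam⟩

lemma le_of_col_sub (𝒞 : Set DCE) (h : DCE.phi1 𝒞) {E F : DCE} (hE : E ∈ 𝒞) (hF : F ∈ 𝒞)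
    {i j : ℕ} (hi : i < F.N) (hj : j < E.N) (hsub : F.col i ⊆ E.col j) : DCE.le E F := by
  obtain ⟨hr, 𝕀, hex⟩ := h.2.2.1 E hE F hF ⟨i, hi, j, hj, hsub⟩
  exact ⟨hr, 𝕀, hex.1⟩

lemma col_subset_Iio {𝒞 : Set DCE} (h : DCE.phi1 𝒞) {E : DCE} (hE : E ∈ 𝒞) {i : ℕ}
    (hi : i < E.N) : E.col i ⊆ Set.Iio omega1 := by
  rintro y ⟨c, hc, rfl⟩
  exact (h.2.1 E hE).2.2.2.2.1 c hc i hi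

end DCEAux

/-- Lemma 7.e/7.g: under `φ₁(𝒞,𝒯,𝐄)`, for every uncountable `X ⊆ ω₁` the collection
`𝒞(X) = {(a,𝒜) ∈ 𝒞 : X ⊆ 𝒜_i for some i < N_𝒜}` is a well-order under `≺`
(linearly ordered by `⪯` and antisymmetric); moreover it is finite. -/
theorem dce_CX_finite_wellorder (𝒞 : Set DCE) (h : DCE.phi1 𝒞)
    (X : Set Ordinal) (hX : X ⊆ Set.Iio omega1) (hXunc : ¬X.Countable) :
    {E ∈ 𝒞 | ∃ i, i < E.N ∧ X ⊆ E.col i}.Finite ∧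
    (∀ E ∈ {E ∈ 𝒞 | ∃ i, i < E.N ∧ X ⊆ E.col i},
     ∀ F ∈ {E ∈ 𝒞 | ∃ i, i < E.N ∧ X ⊆ E.col i},
       DCE.le E F ∨ DCE.le F E) ∧
    (∀ E ∈ {E ∈ 𝒞 | ∃ i, i < E.N ∧ X ⊆ E.col i},
     ∀ F ∈ {E ∈ 𝒞 | ∃ i, i < E.N ∧ X ⊆ E.col i},
       DCE.le E F → DCE.le F E → E = F) := by
  classical
  set CX := {E ∈ 𝒞 | ∃ i, i < E.N ∧ X ⊆ E.col i} with hCXdef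
  -- linearity
  have hlin : ∀ E ∈ CX, ∀ F ∈ CX, DCE.le E F ∨ DCE.le F E := by
    rintro E ⟨hE, i, hi, hXi⟩ F ⟨hF, j, hj, hXj⟩
    have hiT : E.col i ∈ DCE.Tset 𝒞 := ⟨E, hE, i, hi, rfl⟩
    have hjT : F.col j ∈ DCE.Tset 𝒞 := ⟨F, hF, j, hj, rfl⟩
    have hcomp : F.col j ⊆ E.col i ∨ E.col i ⊆ F.col j := by
      by_contra hc
      push_neg at hc
      have hct := h.2.2.2.2.1 (E.col i) hiT (F.col j) hjT hc.2 hc.1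
      exact hXunc (hct.mono (Set.subset_inter hXi hXj))
    rcases hcomp with hs | hs
    · exact Or.inl (DCEAux.le_of_col_sub 𝒞 h hE hF hj hi hs)
    · exact Or.inr (DCEAux.le_of_col_sub 𝒞 h hF hE hi hj hs)
  -- antisymmetry
  have hanti : ∀ E ∈ CX, ∀ F ∈ CX, DCE.le E F → DCE.le F E → E = F := by
    rintro E ⟨hE, -⟩ F ⟨hF, -⟩ h1 h2
    exact DCEAux.le_antisym 𝒞 h hE hF h1 h2
  -- finiteness
  have hXne : X.Nonempty := by
    rw [Set.nonempty_iff_ne_empty]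
    rintro rfl
    exact hXunc Set.countable_empty
  obtain ⟨x, hxX⟩ := hXne
  set S := {W ∈ DCE.Tset 𝒞 | X ⊆ W} with hSdef
  have hSprop : ∀ W ∈ S, ¬W.Countable ∧ W ⊆ Set.Iio omega1 ∧ x ∈ W := by
    rintro W ⟨⟨E, hE, i, hi, rfl⟩, hXW⟩
    exact ⟨fun hc => hXunc (hc.mono hXW), DCEAux.col_subset_Iio h hE hi, hXW hxX⟩
  set ρ : Set Ordinal → Ordinal := fun W => sInf {β | Ordinal.enumOrd W β = x} with hρdef
  have hρspec : ∀ W ∈ S, ρ W < omega1 ∧ Ordinal.enumOrd W (ρ W) = x := by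
    intro W hW
    obtain ⟨hWc, hWb, hxW⟩ := hSprop W hW
    obtain ⟨β, hβ, hβx⟩ := DCEAux.enumOrd_surj_lt W hWc hWb hxW
    have hne : {β | Ordinal.enumOrd W β = x}.Nonempty := ⟨β, hβx⟩
    exact ⟨lt_of_le_of_lt (csInf_le' hβx) hβ, csInf_mem hne⟩
  have hmono : ∀ W₁ ∈ S, ∀ W₂ ∈ S, W₂ ⊆ W₁ → W₂ ≠ W₁ → ρ W₂ < ρ W₁ := by
    intro W₁ hW₁ W₂ hW₂ hsub hne
    obtain ⟨h₁lt, h₁eq⟩ := hρspec W₁ hW₁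
    obtain ⟨h₂lt, h₂eq⟩ := hρspec W₂ hW₂
    have hT4 := h.2.2.2.2.2 W₁ hW₁.1 W₂ hW₂.1 hsub hne
    rcases lt_trichotomy (ρ W₂) (ρ W₁) with hlt | heq | hgt
    · exact hlt
    · exfalso
      have h4 := hT4 (ρ W₂) h₂lt
      rw [h₂eq, heq, h₁eq] at h4
      exact lt_irrefl x h4
    · exfalso
      obtain ⟨hWc₂, hWb₂, -⟩ := hSprop W₂ hW₂
      have hst := (DCEAux.enumOrd_good W₂ hWc₂ hWb₂ (ρ W₂) h₂lt).2 (ρ W₁) hgt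
      have h4 := hT4 (ρ W₁) h₁lt
      rw [h₁eq] at h4
      rw [h₂eq] at hst
      exact absurd (h4.trans hst) (lt_irrefl x)
  have hSfin : S.Finite := by
    rcases Set.eq_empty_or_nonempty S with hemp | ⟨m₀, hm₀⟩
    · rw [hemp]; exact Set.finite_empty
    · have hne : (ρ '' S).Nonempty := ⟨ρ m₀, Set.mem_image_of_mem _ hm₀⟩
      obtain ⟨m, hmS, hmρ⟩ : ∃ m ∈ S, ρ m = sInf (ρ '' S) := by
        obtain ⟨m, hmS, hmeq⟩ := csInf_mem hne
        exact ⟨m, hmS, hmeq⟩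
      have hmin : ∀ W ∈ S, m ⊆ W := by
        intro W hW
        rcases eq_or_ne W m with rfl | hne'
        · exact subset_rfl
        have hcomp : W ⊆ m ∨ m ⊆ W := by
          by_contra hc
          push_neg at hc
          have hct := h.2.2.2.2.1 W hW.1 m hmS.1 hc.1 hc.2
          exact hXunc (hct.mono (Set.subset_inter hW.2 hmS.2))
        rcases hcomp with hsub | hsub
        · exfalso
          have hlt := hmono m hmS W hW hsub hne'
          have hle : sInf (ρ '' S) ≤ ρ W := csInf_le' (Set.mem_image_of_mem ρ hW)
          rw [← hmρ] at hle
          exact absurd hlt (not_lt.mpr hle)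
        · exact hsub
      refine (Set.Finite.insert m (h.2.2.2.1 m hmS.1)).subset ?_
      intro W hW
      rcases eq_or_ne W m with rfl | hne'
      · exact Set.mem_insert _ _
      · exact Set.mem_insert_of_mem _
          ⟨hW.1, (Set.ssubset_iff_subset_ne).mpr ⟨hmin W hW, Ne.symm hne'⟩⟩
  have hfin : CX.Finite := by
    have hSsub : Finite ↥S := hSfin.to_subtype
    have key : ∀ E, E ∈ CX → ∃ i, i < E.N ∧ X ⊆ E.col i := fun E hE => hE.2
    choose idx hidx1 hidx2 using key
    let g : ↥CX → ↥S := fun p =>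
      ⟨p.1.col (idx p.1 p.2),
        ⟨⟨p.1, p.2.1, idx p.1 p.2, hidx1 p.1 p.2, rfl⟩, hidx2 p.1 p.2⟩⟩
    have hginj : Function.Injective g := by
      rintro ⟨E, hE⟩ ⟨F, hF⟩ hgef
      have hcol : E.col (idx E hE) = F.col (idx F hF) := congrArg Subtype.val hgef
      have hEF : DCE.le E F :=
        DCEAux.le_of_col_sub 𝒞 h hE.1 hF.1 (hidx1 F hF) (hidx1 E hE) (hcol ▸ subset_rfl)
      have hFE : DCE.le F E :=
        DCEAux.le_of_col_sub 𝒞 h hF.1 hE.1 (hidx1 E hE) (hidx1 F hF) (hcol ▸ subset_rfl)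
      exact Subtype.ext (DCEAux.le_antisym 𝒞 h hE.1 hF.1 hEF hFE)
    rw [← Set.finite_coe_iff]
    exact Finite.of_injective g hginj
  exact ⟨hfin, hlin, hanti⟩
end

section
/- Assume φ₁(𝒞,𝒯) and |𝒞| < 𝔞_{ω₁}. Then for every uncountable A ⊆ ω₁ there exists an uncountable B ⊆ A such that for every X ∈ 𝒯, either B ⊊ X or |B ∩ X| ≤ ω. -/
/-- The generalized almost disjointness number `𝔞_{ω₁}`: the least cardinality of an
uncountable maximal almost disjoint family of uncountable subsets of `ω₁`
(almost disjointness mod countable). -/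
noncomputable def aOmega1 : Cardinal.{1} :=
  sInf {c : Cardinal.{1} | ∃ 𝒜 : Set (Set Ordinal.{0}),
    ¬𝒜.Countable ∧
    (∀ X ∈ 𝒜, X ⊆ Set.Iio omega1 ∧ ¬X.Countable) ∧
    (∀ X ∈ 𝒜, ∀ Y ∈ 𝒜, X ≠ Y → (X ∩ Y).Countable) ∧
    (∀ Z : Set Ordinal.{0}, Z ⊆ Set.Iio omega1 → ¬Z.Countable →
      ∃ Y ∈ 𝒜, ¬(Z ∩ Y).Countable) ∧
    Cardinal.mk ↥𝒜 = c}



/-!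
Call a node `X ∈ 𝒯` *heavy* if `A ∩ X` is uncountable. It suffices to find a node `C` and an
uncountable `B ⊆ A ∩ C` that is almost disjoint from every node strictly below `C`: by (T3) every
other node either contains `C` or meets it countably, so `B` minus one point works.

If there are only countably many heavy nodes, (T4) makes `⊂` well founded on the nodes through a
fixed point, so each `x ∈ A` lies in a `⊂`-minimal heavy node, and one heavy node is minimal for
uncountably many `x`.

If there are uncountably many heavy nodes and no such `C` exists, grade the nodes by their
(finite, by (T1)) number of strict supersets. Nodes of equal depth are almost disjoint by (T3),
some depth `n` has uncountably many heavy nodes, and every uncountable `Z ⊆ A` meets some node of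
depth `n` uncountably. So the traces on `A` of the heavy nodes of depth `n` form, together with
`ω₁ \ A`, an uncountable maximal almost disjoint family of size at most `|𝒞| · ℵ₀`, which
contradicts `|𝒞| < 𝔞_{ω₁}`.
-/

open Set Cardinal

theorem countable_Iio_of_lt_omega1_s16 {x : Ordinal.{0}} (hx : x < omega1) : (Iio x).Countable := by
  rw [← le_aleph0_iff_set_countable, mk_Iio_ordinal, lift_le_aleph0, ← lt_aleph_one_iff]
  exact lt_ord.mp hx

theorem countable_Iic_of_lt_omega1_s16 {x : Ordinal.{0}} (hx : x < omega1) : (Iic x).Countable := by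
  rw [← Iio_insert]
  exact (countable_Iio_of_lt_omega1_s16 hx).insert x

theorem not_countable_Iio_omega1 : ¬(Iio omega1).Countable := by
  rw [← le_aleph0_iff_set_countable, mk_Iio_ordinal, lift_le_aleph0, omega1, card_ord,
    ← lt_aleph_one_iff]
  exact lt_irrefl _

section EnumOrd

variable {X : Set Ordinal.{0}}

theorem enumOrd_mem_of_lt_omega1 (hX : X ⊆ Iio omega1) (hXu : ¬X.Countable) {α : Ordinal.{0}}
    (hα : α < omega1) :
    Ordinal.enumOrd X α ∈ X ∧ ∀ β < α, Ordinal.enumOrd X β < Ordinal.enumOrd X α := by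
  induction α using WellFoundedLT.induction with
  | _ α ih =>
  rw [Ordinal.enumOrd]
  refine csInf_mem (s := X ∩ {b | ∀ β < α, Ordinal.enumOrd X β < b}) ?_
  by_contra hempty
  -- otherwise `X` would be covered by the countably many countable sets `Iic (enumOrd X β)`
  refine hXu (((countable_Iio_of_lt_omega1_s16 hα).biUnion fun β hβ =>
    countable_Iic_of_lt_omega1_s16 (hX (ih β hβ (hβ.trans hα)).1)).mono fun x hx => ?_)
  by_contra hx'
  simp only [mem_iUnion, mem_Iic, not_exists, not_le] at hx'
  exact hempty ⟨x, hx, fun β hβ => hx' β hβ⟩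

theorem strictMonoOn_enumOrd_Iio_omega1 (hX : X ⊆ Iio omega1) (hXu : ¬X.Countable) :
    StrictMonoOn (Ordinal.enumOrd X) (Iio omega1) :=
  fun _ _ _ hβ hαβ => (enumOrd_mem_of_lt_omega1 hX hXu hβ).2 _ hαβ

theorem exists_enumOrd_eq_of_lt_omega1 (hX : X ⊆ Iio omega1) (hXu : ¬X.Countable)
    {x : Ordinal.{0}} (hx : x ∈ X) : ∃ α < omega1, Ordinal.enumOrd X α = x := by
  have hmono := strictMonoOn_enumOrd_Iio_omega1 hX hXu
  have hne : ∃ α < omega1, x ≤ Ordinal.enumOrd X α := by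
    by_contra! hlt
    exact not_countable_Iio_omega1 (MapsTo.countable_of_injOn (fun α hα => hlt α hα)
      hmono.injOn (countable_Iio_of_lt_omega1_s16 (hX hx)))
  obtain ⟨α, ⟨hα, hxα⟩, hmin⟩ :=
    wellFounded_lt.has_min {α | α < omega1 ∧ x ≤ Ordinal.enumOrd X α} hne
  refine ⟨α, hα, le_antisymm (Ordinal.enumOrd_le_of_forall_lt hx fun β hβ => ?_) hxα⟩
  exact lt_of_not_ge fun h => hmin β ⟨hβ.trans hα, h⟩ hβ

end EnumOrd

/-- Along a `⊂`-chain through `x`, the position of `x` in the increasing enumeration strictly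
decreases. -/
theorem wellFoundedOn_ssubset_of_enumOrd_lt {𝒮 : Set (Set Ordinal.{0})}
    (hsub : ∀ X ∈ 𝒮, X ⊆ Iio omega1) (hunc : ∀ X ∈ 𝒮, ¬X.Countable)
    (henum : ∀ X ∈ 𝒮, ∀ Y ∈ 𝒮, Y ⊂ X → ∀ α < omega1,
      Ordinal.enumOrd X α < Ordinal.enumOrd Y α)
    (x : Ordinal.{0}) : {X ∈ 𝒮 | x ∈ X}.WellFoundedOn (· ⊂ ·) := by
  rw [wellFoundedOn_iff_no_descending_seq]
  intro f hf
  choose α hα hαx using fun n =>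
    exists_enumOrd_eq_of_lt_omega1 (hsub _ (hf n).1) (hunc _ (hf n).1) (hf n).2
  have hdesc : ∀ n, α (n + 1) < α n := by
    intro n
    by_contra! hle
    have hlt := henum _ (hf n).1 _ (hf (n + 1)).1 (f.map_rel_iff.mpr (Nat.lt_succ_self n))
      (α (n + 1)) (hα (n + 1))
    have hle' := (strictMonoOn_enumOrd_Iio_omega1 (hsub _ (hf n).1) (hunc _ (hf n).1)).monotoneOn
      (hα n) (hα (n + 1)) hle
    rw [hαx] at hlt hle'
    exact hlt.not_ge hle'
  obtain ⟨n, hn⟩ := WellFounded.not_rel_apply_succ (r := (· < ·)) α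
  exact hn (hdesc n)

section Tree

variable {α : Type*} {𝒯 : Set (Set α)}

noncomputable def treeDepth (𝒯 : Set (Set α)) (X : Set α) : ℕ := {Y ∈ 𝒯 | X ⊂ Y}.ncard

theorem treeDepth_lt_of_ssubset {X Y : Set α} (hX : {Z ∈ 𝒯 | X ⊂ Z}.Finite) (hY : Y ∈ 𝒯)
    (hXY : X ⊂ Y) : treeDepth 𝒯 Y < treeDepth 𝒯 X :=
  ncard_lt_ncard ⟨fun _ hZ => ⟨hZ.1, hXY.trans hZ.2⟩, fun h => ssubset_irrefl Y (h ⟨hY, hXY⟩).2⟩ hX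

theorem countable_inter_of_treeDepth_eq (hfin : ∀ X ∈ 𝒯, {Y ∈ 𝒯 | X ⊂ Y}.Finite)
    (hcomp : ∀ X ∈ 𝒯, ∀ Y ∈ 𝒯, ¬(X ∩ Y).Countable → X ⊆ Y ∨ Y ⊆ X) {X Y : Set α}
    (hX : X ∈ 𝒯) (hY : Y ∈ 𝒯) (hne : X ≠ Y) (hd : treeDepth 𝒯 X = treeDepth 𝒯 Y) :
    (X ∩ Y).Countable := by
  by_contra hXY
  rcases hcomp X hX Y hY hXY with h | h
  · exact (treeDepth_lt_of_ssubset (hfin X hX) hY (h.ssubset_of_ne hne)).ne' hd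
  · exact (treeDepth_lt_of_ssubset (hfin Y hY) hX (h.ssubset_of_ne hne.symm)).ne hd

/-- The strict supersets of an uncountable node form a chain, so their depths are exactly
`0, …, treeDepth 𝒯 X - 1`. -/
theorem exists_superset_treeDepth_eq (hfin : ∀ X ∈ 𝒯, {Y ∈ 𝒯 | X ⊂ Y}.Finite)
    (hcomp : ∀ X ∈ 𝒯, ∀ Y ∈ 𝒯, ¬(X ∩ Y).Countable → X ⊆ Y ∨ Y ⊆ X) {X : Set α}
    (hX : X ∈ 𝒯) (hXu : ¬X.Countable) {n : ℕ} (hn : n ≤ treeDepth 𝒯 X) :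
    ∃ Y ∈ 𝒯, X ⊆ Y ∧ treeDepth 𝒯 Y = n := by
  rcases hn.eq_or_lt with rfl | hlt
  · exact ⟨X, hX, subset_rfl, rfl⟩
  have hinj : InjOn (treeDepth 𝒯) {Y ∈ 𝒯 | X ⊂ Y} := by
    intro Y hY Z hZ hYZ
    by_contra hne
    have hYZu : ¬(Y ∩ Z).Countable := fun h => hXu (h.mono (subset_inter hY.2.subset hZ.2.subset))
    exact hYZu (countable_inter_of_treeDepth_eq hfin hcomp hY.1 hZ.1 hne hYZ)
  have himage : treeDepth 𝒯 '' {Y ∈ 𝒯 | X ⊂ Y} = Iio (treeDepth 𝒯 X) := by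
    refine eq_of_subset_of_ncard_le ?_ ?_ (finite_Iio _)
    · rintro _ ⟨Y, hY, rfl⟩
      exact treeDepth_lt_of_ssubset (hfin X hX) hY.1 hY.2
    · rw [hinj.ncard_image, ncard_Iio_nat]
      rfl
  obtain ⟨Y, hY, hYn⟩ : n ∈ treeDepth 𝒯 '' {Y ∈ 𝒯 | X ⊂ Y} := himage ▸ hlt
  exact ⟨Y, hY.1, hY.2.subset, hYn⟩

theorem exists_treeDepth_eq_of_forall_exists_ssubset
    (hfin : ∀ X ∈ 𝒯, {Y ∈ 𝒯 | X ⊂ Y}.Finite)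
    (hcomp : ∀ X ∈ 𝒯, ∀ Y ∈ 𝒯, ¬(X ∩ Y).Countable → X ⊆ Y ∨ Y ⊆ X) {A W : Set α}
    (hW : W ∈ 𝒯) (hAW : A ⊆ W)
    (hdesc : ∀ C ∈ 𝒯, ∀ B ⊆ A ∩ C, ¬B.Countable → ∃ D ∈ 𝒯, D ⊂ C ∧ ¬(B ∩ D).Countable)
    {V : Set α} (hVA : V ⊆ A) (hV : ¬V.Countable) (n : ℕ) :
    ∃ X ∈ 𝒯, treeDepth 𝒯 X = n ∧ ¬(V ∩ X).Countable := by
  obtain ⟨X, hX, hVX, hn⟩ : ∃ X ∈ 𝒯, ¬(V ∩ X).Countable ∧ n ≤ treeDepth 𝒯 X := by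
    induction n with
    | zero => exact ⟨W, hW, by rwa [inter_eq_left.mpr (hVA.trans hAW)], Nat.zero_le _⟩
    | succ n ih =>
      obtain ⟨X, hX, hVX, hn⟩ := ih
      obtain ⟨D, hD, hDX, hVD⟩ := hdesc X hX (V ∩ X) (inter_subset_inter_left X hVA) hVX
      exact ⟨D, hD, fun h => hVD (h.mono (inter_subset_inter_left D inter_subset_left)),
        hn.trans_lt (treeDepth_lt_of_ssubset (hfin D hD) hX hDX)⟩
  obtain ⟨Y, hY, hXY, rfl⟩ :=
    exists_superset_treeDepth_eq hfin hcomp hX (fun h => hVX (h.mono inter_subset_right)) hn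
  exact ⟨Y, hY, rfl, fun h => hVX (h.mono (inter_subset_inter_right V hXY))⟩

theorem exists_disjoint_below_of_countable {𝒮 : Set (Set α)} {A : Set α} (h𝒮 : 𝒮.Countable)
    (hwf : ∀ x, {X ∈ 𝒮 | x ∈ X}.WellFoundedOn (· ⊂ ·)) (hA : A ⊆ ⋃₀ 𝒮) (hAu : ¬A.Countable) :
    ∃ C ∈ 𝒮, ∃ B ⊆ A ∩ C, ¬B.Countable ∧ ∀ D ∈ 𝒮, D ⊂ C → Disjoint B D := by
  have hmin : ∀ x ∈ A, ∃ C, Minimal (· ∈ {X ∈ 𝒮 | x ∈ X}) C := fun x hx =>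
    (hwf x).exists_minimal (hA hx)
  choose! M hM using hmin
  obtain ⟨C, hC, hB⟩ : ∃ C ∈ 𝒮, ¬(A ∩ M ⁻¹' {C}).Countable := by
    by_contra! h
    exact hAu ((h𝒮.biUnion h).mono fun x hx =>
      mem_biUnion (hM x hx).1.1 (show x ∈ A ∩ M ⁻¹' {M x} from ⟨hx, rfl⟩))
  refine ⟨C, hC, A ∩ M ⁻¹' {C}, fun x hx => ⟨hx.1, hx.2 ▸ (hM x hx.1).1.2⟩, hB, ?_⟩
  rintro D hD hDC
  rw [disjoint_left]
  rintro x ⟨hxA, rfl⟩ hxD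
  exact hDC.2 ((hM x hxA).2 ⟨hD, hxD⟩ hDC.subset)

theorem exists_ssubset_or_countable_inter
    (hcomp : ∀ X ∈ 𝒯, ∀ Y ∈ 𝒯, ¬(X ∩ Y).Countable → X ⊆ Y ∨ Y ⊆ X) {B C : Set α} (hC : C ∈ 𝒯)
    (hBC : B ⊆ C) (hB : ¬B.Countable) (hbelow : ∀ D ∈ 𝒯, D ⊂ C → (B ∩ D).Countable) :
    ∃ B' ⊆ B, ¬B'.Countable ∧ ∀ X ∈ 𝒯, B' ⊂ X ∨ (B' ∩ X).Countable := by
  obtain ⟨b, hb⟩ : B.Nonempty := nonempty_iff_ne_empty.mpr fun h => hB (h ▸ countable_empty)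
  refine ⟨B \ {b}, sdiff_subset, fun h => hB (h.of_sdiff (countable_singleton b)), fun X hX => ?_⟩
  by_cases hCX : C ⊆ X
  · exact Or.inl ((ssubset_iff_of_subset (sdiff_subset.trans (hBC.trans hCX))).mpr
      ⟨b, hCX (hBC hb), fun h => h.2 rfl⟩)
  refine Or.inr ((?_ : (B ∩ X).Countable).mono (inter_subset_inter_left X sdiff_subset))
  by_cases hXC : X ⊆ C
  · exact hbelow X hX (hXC.ssubset_of_ne fun h => hCX h.symm.subset)
  by_contra hBX
  have hCXu : ¬(C ∩ X).Countable := fun h => hBX (h.mono (inter_subset_inter_left X hBC))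
  exact (hcomp C hC X hX hCXu).elim hCX hXC

end Tree

/-- Adding `ω₁ \ A` (when uncountable) turns a maximal almost disjoint family inside `A` into one
inside `ω₁`; it does not change the cardinality since the family is infinite. -/
theorem aOmega1_le_mk {A : Set Ordinal.{0}} (hA : A ⊆ Iio omega1) {𝒜 : Set (Set Ordinal.{0})}
    (h𝒜 : ¬𝒜.Countable) (hsub : ∀ X ∈ 𝒜, X ⊆ A ∧ ¬X.Countable)
    (had : 𝒜.Pairwise fun X Y => (X ∩ Y).Countable)
    (hmax : ∀ Z ⊆ A, ¬Z.Countable → ∃ Y ∈ 𝒜, ¬(Z ∩ Y).Countable) : aOmega1 ≤ #𝒜 := by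
  set 𝒜' := 𝒜 ∪ {Y ∈ ({Iio omega1 \ A} : Set (Set Ordinal.{0})) | ¬Y.Countable}
  have hdisj : ∀ X ∈ 𝒜, Disjoint X (Iio omega1 \ A) := fun X hX =>
    disjoint_sdiff_right.mono_left (hsub X hX).1
  have hmem : #𝒜' ∈ {c : Cardinal.{1} | ∃ 𝒜 : Set (Set Ordinal.{0}), ¬𝒜.Countable ∧
      (∀ X ∈ 𝒜, X ⊆ Iio omega1 ∧ ¬X.Countable) ∧
      (∀ X ∈ 𝒜, ∀ Y ∈ 𝒜, X ≠ Y → (X ∩ Y).Countable) ∧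
      (∀ Z : Set Ordinal.{0}, Z ⊆ Iio omega1 → ¬Z.Countable → ∃ Y ∈ 𝒜, ¬(Z ∩ Y).Countable) ∧
      #𝒜 = c} := by
    refine ⟨𝒜', fun h => h𝒜 (h.mono subset_union_left), ?_, ?_, ?_, rfl⟩
    · rintro X (hX | ⟨rfl, hXu⟩)
      · exact ⟨(hsub X hX).1.trans hA, (hsub X hX).2⟩
      · exact ⟨sdiff_subset, hXu⟩
    · rintro X (hX | ⟨rfl, -⟩) Y (hY | ⟨rfl, -⟩) hne
      · exact had hX hY hne
      · exact (hdisj X hX).inter_eq ▸ countable_empty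
      · exact (hdisj Y hY).symm.inter_eq ▸ countable_empty
      · exact absurd rfl hne
    · intro Z hZ hZu
      by_cases hZA : (Z ∩ A).Countable
      · have hZA' : ¬(Z \ A).Countable := fun h =>
          hZu ((hZA.union h).mono (inter_union_sdiff Z A).ge)
        have hZY : Z \ A ⊆ Z ∩ (Iio omega1 \ A) := fun x hx => ⟨hx.1, hZ hx.1, hx.2⟩
        exact ⟨Iio omega1 \ A, Or.inr ⟨rfl, fun h => hZA' (h.mono (hZY.trans inter_subset_right))⟩,
          fun h => hZA' (h.mono hZY)⟩
      · obtain ⟨Y, hY, hZY⟩ := hmax (Z ∩ A) inter_subset_right hZA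
        exact ⟨Y, Or.inl hY, fun h => hZY (h.mono (inter_subset_inter_left Y inter_subset_left))⟩
  calc aOmega1 ≤ #𝒜' := csInf_le' hmem
    _ ≤ #𝒜 + 1 := (mk_union_le _ _).trans (add_le_add_right (mk_le_one_iff_set_subsingleton.mpr
        (subsingleton_singleton.anti (sep_subset _ _))) _)
    _ = #𝒜 := add_one_eq (lt_of_not_ge (mt le_aleph0_iff_set_countable.mp h𝒜)).le

/-- The heavy nodes of one depth trace out a maximal almost disjoint family on `A`. -/
theorem exists_not_countable_aOmega1_le {𝒯 : Set (Set Ordinal.{0})}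
    (hfin : ∀ X ∈ 𝒯, {Y ∈ 𝒯 | X ⊂ Y}.Finite)
    (hcomp : ∀ X ∈ 𝒯, ∀ Y ∈ 𝒯, ¬(X ∩ Y).Countable → X ⊆ Y ∨ Y ⊆ X) {A : Set Ordinal.{0}}
    (hA : A ⊆ Iio omega1) (hW : Iio omega1 ∈ 𝒯)
    (h𝒮 : ¬{X ∈ 𝒯 | ¬(A ∩ X).Countable}.Countable)
    (hdesc : ∀ C ∈ 𝒯, ∀ B ⊆ A ∩ C, ¬B.Countable → ∃ D ∈ 𝒯, D ⊂ C ∧ ¬(B ∩ D).Countable) :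
    ∃ 𝓛 ⊆ 𝒯, ¬𝓛.Countable ∧ aOmega1 ≤ #𝓛 := by
  obtain ⟨n, hn⟩ : ∃ n, ¬{X ∈ 𝒯 | ¬(A ∩ X).Countable ∧ treeDepth 𝒯 X = n}.Countable := by
    by_contra! h
    refine h𝒮 ((countable_iUnion h).mono ?_)
    exact fun X hX => mem_iUnion_of_mem (treeDepth 𝒯 X) ⟨hX.1, hX.2, rfl⟩
  set 𝓛 := {X ∈ 𝒯 | ¬(A ∩ X).Countable ∧ treeDepth 𝒯 X = n}
  have had : 𝓛.Pairwise fun X Y => (X ∩ Y).Countable := fun X hX Y hY hne =>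
    countable_inter_of_treeDepth_eq hfin hcomp hX.1 hY.1 hne (hX.2.2.trans hY.2.2.symm)
  have hinj : InjOn (A ∩ ·) 𝓛 := by
    intro X hX Y hY hXY
    by_contra hne
    have hAXY : A ∩ X ⊆ X ∩ Y := fun x hx => ⟨hx.2, (show A ∩ X = A ∩ Y from hXY) ▸ hx |>.2⟩
    exact hX.2.1 ((had hX hY hne).mono hAXY)
  refine ⟨𝓛, fun X hX => hX.1, hn, ?_⟩
  rw [← mk_image_eq_of_injOn _ _ hinj]
  refine aOmega1_le_mk hA (fun h => hn (MapsTo.countable_of_injOn (mapsTo_image _ _) hinj h))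
    ?_ ?_ ?_
  · rintro _ ⟨X, hX, rfl⟩
    exact ⟨inter_subset_left, hX.2.1⟩
  · refine (hinj.pairwise_image).mpr fun X hX Y hY hne => ?_
    exact (had hX hY hne).mono (inter_subset_inter inter_subset_right inter_subset_right)
  · intro Z hZA hZu
    obtain ⟨X, hX, hXn, hZX⟩ :=
      exists_treeDepth_eq_of_forall_exists_ssubset hfin hcomp hW hA hdesc hZA hZu n
    refine ⟨A ∩ X, ⟨X, ⟨hX, fun h => hZX (h.mono (inter_subset_inter_left X hZA)), hXn⟩, rfl⟩, ?_⟩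
    rwa [← inter_assoc, inter_eq_left.mpr hZA]

theorem le_of_le_mul_aleph0 {a c : Cardinal} (hc : ℵ₀ < c) (h : c ≤ a * ℵ₀) : c ≤ a := by
  rcases le_total a ℵ₀ with ha | ha
  · exact absurd (h.trans ((mul_le_mul_left ha _).trans aleph0_mul_aleph0.le)) hc.not_ge
  · rwa [mul_aleph0_eq ha] at h

namespace DCE

variable {𝒞 : Set DCE}

theorem mk_Tset_le (𝒞 : Set DCE) : #(Tset 𝒞) ≤ #𝒞 * ℵ₀ := by
  have hsub : Tset 𝒞 ⊆ range fun p : 𝒞 × ℕ => p.1.1.col p.2 := by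
    rintro _ ⟨E, hE, i, -, rfl⟩
    exact ⟨(⟨E, hE⟩, i), rfl⟩
  calc #(Tset 𝒞) ≤ #(𝒞 × ℕ) := (mk_le_mk_of_subset hsub).trans mk_range_le
    _ = #𝒞 * ℵ₀ := by simp

theorem phi1.Iio_omega1_mem_Tset (h : phi1 𝒞) : Iio omega1 ∈ Tset 𝒞 := by
  refine ⟨trivialDCE, h.1, 0, Nat.zero_lt_one, ?_⟩
  ext x
  constructor
  · intro hx
    exact ⟨fun j => if j = 0 then x else 0, ⟨x, hx, rfl⟩, by simp⟩
  · rintro ⟨c, ⟨β, hβ, rfl⟩, rfl⟩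
    simpa using hβ

theorem phi1.subset_Iio_omega1 (h : phi1 𝒞) {X : Set Ordinal.{0}} (hX : X ∈ Tset 𝒞) :
    X ⊆ Iio omega1 := by
  obtain ⟨E, hE, i, hi, rfl⟩ := hX
  rintro _ ⟨c, hc, rfl⟩
  exact (h.2.1 E hE).2.2.2.2.1 c hc i hi

theorem phi1.subset_or_subset (h : phi1 𝒞) {X Y : Set Ordinal.{0}} (hX : X ∈ Tset 𝒞)
    (hY : Y ∈ Tset 𝒞) (hXY : ¬(X ∩ Y).Countable) : X ⊆ Y ∨ Y ⊆ X := by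
  by_contra! hinc
  exact hXY (h.2.2.2.2.1 X hX Y hY hinc.1 hinc.2)

theorem phi1.exists_almostDisjoint_below (h : phi1 𝒞)
    (hsize : #𝒞 < aOmega1) {A : Set Ordinal.{0}} (hA : A ⊆ Iio omega1) (hAu : ¬A.Countable) :
    ∃ C ∈ Tset 𝒞, ∃ B ⊆ A ∩ C, ¬B.Countable ∧ ∀ D ∈ Tset 𝒞, D ⊂ C → (B ∩ D).Countable := by
  set 𝒮 := {X ∈ Tset 𝒞 | ¬(A ∩ X).Countable}
  have hW : Iio omega1 ∈ 𝒮 := ⟨h.Iio_omega1_mem_Tset, by rwa [inter_eq_left.mpr hA]⟩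
  by_cases h𝒮 : 𝒮.Countable
  · have hwf := wellFoundedOn_ssubset_of_enumOrd_lt (𝒮 := 𝒮)
      (fun X hX => h.subset_Iio_omega1 hX.1) (fun X hX hc => hX.2 (hc.mono inter_subset_right))
      (fun X hX Y hY hYX => h.2.2.2.2.2 X hX.1 Y hY.1 hYX.subset hYX.ne)
    obtain ⟨C, hC, B, hB, hBu, hdisj⟩ :=
      exists_disjoint_below_of_countable h𝒮 hwf (hA.trans (subset_sUnion_of_mem hW)) hAu
    refine ⟨C, hC.1, B, hB, hBu, fun D hD hDC => ?_⟩
    by_cases hAD : (A ∩ D).Countable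
    · exact hAD.mono (inter_subset_inter_left D (hB.trans inter_subset_left))
    · exact (hdisj D ⟨hD, hAD⟩ hDC).inter_eq ▸ countable_empty
  by_contra! hdesc
  obtain ⟨𝓛, h𝓛, h𝓛u, hle⟩ := exists_not_countable_aOmega1_le h.2.2.2.1
    (fun X hX Y hY => h.subset_or_subset hX hY) hA hW.1 h𝒮 hdesc
  have h𝓛𝒞 : #𝓛 ≤ #𝒞 := le_of_le_mul_aleph0 (lt_of_not_ge (mt le_aleph0_iff_set_countable.mp h𝓛u))
    ((mk_le_mk_of_subset h𝓛).trans (mk_Tset_le 𝒞))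
  exact (hsize.trans_le (hle.trans h𝓛𝒞)).false

end DCE

/-- Lemma 30: assume `φ₁(𝒞,𝒯)` and `|𝒞| < 𝔞_{ω₁}`. Then for every uncountable `A ⊆ ω₁`
there is an uncountable `B ⊆ A` such that for every `X ∈ 𝒯`, either `B ⊊ X` or
`B ∩ X` is countable. -/
theorem dce_refine_wrt_tree (𝒞 : Set DCE) (h : DCE.phi1 𝒞)
    (hsize : Cardinal.mk ↥𝒞 < aOmega1)
    (A : Set Ordinal) (hA : A ⊆ Set.Iio omega1) (hAunc : ¬A.Countable) :
    ∃ B ⊆ A, ¬B.Countable ∧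
      ∀ X ∈ DCE.Tset 𝒞, B ⊂ X ∨ (B ∩ X).Countable := by
  obtain ⟨C, hC, B, hB, hBu, hbelow⟩ :=
    h.exists_almostDisjoint_below hsize hA hAunc
  obtain ⟨B', hB'B, hB'u, hB'⟩ := exists_ssubset_or_countable_inter
    (fun X hX Y hY => h.subset_or_subset hX hY) hC (hB.trans inter_subset_right) hBu hbelow
  exact ⟨B', hB'B.trans (hB.trans inter_subset_left), hB'u, hB'⟩
end
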